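/- arXiv:1607.06785 — 9 statements merged into one kernel-verified Lean document; each statement's English description precedes it below -/
import Mathlib

section
/- Let D be a design with v×b incidence matrix A over GF(p), and suppose the minimum Hamming weight of the column span C of A (a code of length v) equals d. If B is a block of D of size d, then the residual design D_B is linearly embeddable over GF(p), i.e., rank_p(A) = rank_p(A'') + 1, where A'' is the incidence matrix of D_B. -/
open Finset
open Matrix

/-- Let `A` be the incidence matrix over `GF(p)` of a design, and suppose
the minimum Hamming weight of the column span of `A` equals `d`. If the last column of `A`
is the incidence vector of a block `B` of size `d` (consisting of the first `d` points),
then the residual design `D_B` is linearly embeddable over `GF(p)`: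
`rank_p A = rank_p A'' + 1`, where `A''` is the incidence matrix of `D_B`. -/
theorem residual_linearly_embeddable (p : ℕ) [Fact p.Prime] (d m b : ℕ) (hd : 0 < d)
    (A : Matrix (Fin (d + m)) (Fin (b + 1)) (ZMod p))
    (hentries : ∀ i j, A i j = 0 ∨ A i j = 1)
    (hlast : ∀ i : Fin (d + m), A i (Fin.last b) = if (i : ℕ) < d then 1 else 0)
    (hmin : ∀ x ∈ Submodule.span (ZMod p)
        (Set.range fun j : Fin (b + 1) => fun i : Fin (d + m) => A i j),
      x ≠ 0 → d ≤ (Finset.univ.filter fun i => x i ≠ 0).card) :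
    A.rank
      = (A.submatrix (fun i : Fin m => Fin.natAdd d i)
          (fun j : Fin b => Fin.castSucc j)).rank + 1 := by
  classical
  set cols : Fin (b + 1) → (Fin (d + m) → ZMod p) := fun j i => A i j with hcols
  set C : Submodule (ZMod p) (Fin (d + m) → ZMod p) :=
    Submodule.span (ZMod p) (Set.range cols) with hCdef
  set π : (Fin (d + m) → ZMod p) →ₗ[ZMod p] (Fin m → ZMod p) :=
    LinearMap.funLeft (ZMod p) (ZMod p) (Fin.natAdd d) with hπ
  set e : Fin (d + m) → ZMod p := cols (Fin.last b) with he
  have hdm : 0 < d + m := Nat.lt_of_lt_of_le hd (Nat.le_add_right _ _)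
  set i₀ : Fin (d + m) := ⟨0, hdm⟩ with hi₀
  have he_val : ∀ i : Fin (d + m), e i = if (i : ℕ) < d then 1 else 0 := fun i => hlast i
  have he_i₀ : e i₀ = 1 := by rw [he_val]; simp [hi₀, hd]
  have heC : e ∈ C := Submodule.subset_span ⟨Fin.last b, rfl⟩
  have heker : π e = 0 := by
    funext i
    have : ¬ ((Fin.natAdd d i : ℕ) < d) := by
      simp only [Fin.coe_natAdd]; omega
    show e (Fin.natAdd d i) = 0
    rw [he_val, if_neg this]
  have hne : e ≠ 0 := fun h => by
    have := congrFun h i₀; rw [he_i₀] at this; exact one_ne_zero this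
  have hcard : (univ.filter fun i : Fin (d + m) => (i : ℕ) < d).card ≤ d := by
    have : ∀ i ∈ univ.filter fun i : Fin (d + m) => (i : ℕ) < d,
        (⟨(i : ℕ) % d, Nat.mod_lt _ hd⟩ : Fin d) ∈ (univ : Finset (Fin d)) := fun _ _ => mem_univ _
    refine (Finset.card_le_card_of_injOn _ this ?_).trans (by simp)
    intro i hi j hj hij
    simp only [coe_filter, Set.mem_setOf_eq] at hi hj
    have h1 : (i : ℕ) % d = (i : ℕ) := Nat.mod_eq_of_lt hi.2
    have h2 : (j : ℕ) % d = (j : ℕ) := Nat.mod_eq_of_lt hj.2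
    have := congrArg Fin.val hij
    simp only [h1, h2] at this
    exact Fin.ext this
  -- key lemma
  have key : ∀ x ∈ C, π x = 0 → x = x i₀ • e := by
    intro x hxC hxk
    by_contra hne'
    set y : Fin (d + m) → ZMod p := x - x i₀ • e with hy
    have hyC : y ∈ C := sub_mem hxC (Submodule.smul_mem _ _ heC)
    have hy0 : y ≠ 0 := fun h => hne' (sub_eq_zero.mp h)
    have hd_le := hmin y hyC hy0
    have hxzero : ∀ i : Fin (d + m), d ≤ (i : ℕ) → x i = 0 := by
      intro i hi
      have h := congrFun hxk ⟨(i : ℕ) - d, by omega⟩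
      have : Fin.natAdd d (⟨(i : ℕ) - d, by omega⟩ : Fin m) = i := by
        apply Fin.ext; simp [Fin.natAdd]; omega
      simpa [hπ, LinearMap.funLeft, this] using h
    have hsub : (univ.filter fun i => y i ≠ 0)
        ⊆ (univ.filter fun i : Fin (d + m) => (i : ℕ) < d).erase i₀ := by
      intro i hi
      simp only [mem_filter, mem_univ, true_and] at hi
      have hlt : (i : ℕ) < d := by
        by_contra h
        push_neg at h
        have h1 : x i = 0 := hxzero i h
        have h2 : e i = 0 := by rw [he_val]; simp [Nat.not_lt.mpr h]
        exact hi (by simp [hy, h1, h2])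
      have hnei : i ≠ i₀ := by
        intro h
        subst h
        exact hi (by simp [hy, he_i₀])
      exact mem_erase.mpr ⟨hnei, mem_filter.mpr ⟨mem_univ _, hlt⟩⟩
    have hi₀mem : i₀ ∈ univ.filter fun i : Fin (d + m) => (i : ℕ) < d :=
      mem_filter.mpr ⟨mem_univ _, by simp [hi₀, hd]⟩
    have := (Finset.card_le_card hsub).trans_eq (Finset.card_erase_of_mem hi₀mem)
    omega
  -- rank-nullity
  set f : C →ₗ[ZMod p] (Fin m → ZMod p) := π.comp C.subtype with hf
  have hrange : LinearMap.range f = Submodule.map π C := by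
    rw [hf, LinearMap.range_comp, Submodule.range_subtype]
  set A₂ := A.submatrix (fun i : Fin m => Fin.natAdd d i) (fun j : Fin b => Fin.castSucc j)
    with hA₂
  have hmap : Submodule.map π C = Submodule.span (ZMod p) (Set.range A₂ᵀ) := by
    rw [hCdef, Submodule.map_span, ← Set.range_comp]
    apply le_antisymm
    · rw [Submodule.span_le]
      rintro _ ⟨j, rfl⟩
      refine Fin.lastCases ?_ (fun j' => ?_) j
      · have : (π ∘ cols) (Fin.last b) = 0 := heker
        rw [this]; exact Submodule.zero_mem _
      · exact Submodule.subset_span ⟨j', rfl⟩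
    · rw [Submodule.span_le]
      rintro _ ⟨j, rfl⟩
      exact Submodule.subset_span ⟨Fin.castSucc j, rfl⟩
  have hker : Module.finrank (ZMod p) (LinearMap.ker f) = 1 := by
    have hemem : (⟨e, heC⟩ : C) ∈ LinearMap.ker f := by
      rw [LinearMap.mem_ker]; exact heker
    refine finrank_eq_one (⟨⟨e, heC⟩, hemem⟩ : LinearMap.ker f) ?_ ?_
    · intro h
      apply hne
      exact congrArg (fun z : LinearMap.ker f => (z : Fin (d + m) → ZMod p)) h
    · rintro ⟨⟨x, hxC⟩, hxk⟩
      rw [LinearMap.mem_ker] at hxk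
      refine ⟨x i₀, ?_⟩
      have := key x hxC hxk
      apply Subtype.ext; apply Subtype.ext
      exact this.symm
  have hrn := LinearMap.finrank_range_add_finrank_ker f
  rw [hrange, hmap, hker] at hrn
  have h1 : A.rank = Module.finrank (ZMod p) C := by
    rw [Matrix.rank_eq_finrank_span_cols]; rfl
  have h2 : A₂.rank = Module.finrank (ZMod p) (Submodule.span (ZMod p) (Set.range A₂ᵀ)) :=
    Matrix.rank_eq_finrank_span_cols A₂
  rw [h1, ← hrn, h2]
end

section
/- If D is a 2-(v,k,λ) design with v > k > 0, then the number of blocks b satisfies b ≥ v (Fisher's inequality). -/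
open Finset

lemma fisher_aux_count (v k lam b : ℕ)
    (B : Fin b → Finset (Fin v))
    (hsize : ∀ j, (B j).card = k)
    (hpair : ∀ x y : Fin v, x ≠ y →
      (Finset.univ.filter fun j => x ∈ B j ∧ y ∈ B j).card = lam)
    (x : Fin v) :
    (univ.filter fun j => x ∈ B j).card * (k - 1) = lam * (v - 1) := by
  classical
  have h1 : ∑ y ∈ univ.erase x, (univ.filter fun j => x ∈ B j ∧ y ∈ B j).card
      = lam * (v - 1) := by
    rw [Finset.sum_congr rfl
      (fun y hy => hpair x y (Ne.symm (Finset.ne_of_mem_erase hy)))]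
    simp [Finset.card_erase_of_mem, mul_comm]
  have hinner : ∀ j : Fin b,
      (∑ y ∈ univ.erase x, if x ∈ B j ∧ y ∈ B j then (1:ℕ) else 0)
        = if x ∈ B j then k - 1 else 0 := by
    intro j
    by_cases hx : x ∈ B j
    · simp only [hx, true_and, if_true]
      rw [← Finset.card_filter]
      have : ((univ.erase x).filter fun y => y ∈ B j) = (B j).erase x := by
        ext y; simp [Finset.mem_erase, and_comm]
      rw [this, Finset.card_erase_of_mem hx, hsize j]
    · simp [hx]
  have h2 : ∑ y ∈ univ.erase x, (univ.filter fun j => x ∈ B j ∧ y ∈ B j).card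
      = (univ.filter fun j => x ∈ B j).card * (k - 1) := by
    have hrw : ∀ y, (univ.filter fun j => x ∈ B j ∧ y ∈ B j).card
        = ∑ j : Fin b, if x ∈ B j ∧ y ∈ B j then (1:ℕ) else 0 :=
      fun y => Finset.card_filter _ _
    rw [Finset.sum_congr rfl fun y _ => hrw y, Finset.sum_comm]
    rw [Finset.sum_congr rfl fun j _ => hinner j]
    rw [Finset.sum_ite, Finset.sum_const, Finset.sum_const]
    simp [mul_comm]
  rw [← h2, h1]

/-- Fisher's inequality: If `D` is a 2-(v,k,λ) design with `v > k > 0`,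
then the number of blocks `b` satisfies `b ≥ v`. -/
theorem fisher_inequality (v k lam b : ℕ) (hk0 : 0 < k) (hkv : k < v) (hlam : 1 ≤ lam)
    (B : Fin b → Finset (Fin v))
    (hsize : ∀ j, (B j).card = k)
    (hpair : ∀ x y : Fin v, x ≠ y →
      (Finset.univ.filter fun j => x ∈ B j ∧ y ∈ B j).card = lam) :
    v ≤ b := by
  classical
  have hcount := fisher_aux_count v k lam b B hsize hpair
  have hv1 : 1 ≤ v - 1 := by omega
  have hlamv : 1 ≤ lam * (v - 1) := Nat.one_le_iff_ne_zero.mpr (by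
    intro h0
    rcases Nat.mul_eq_zero.mp h0 with h | h <;> omega)
  have hk2 : 2 ≤ k := by
    by_contra h
    have := hcount ⟨0, by omega⟩
    have hk10 : k - 1 = 0 := by omega
    rw [hk10, Nat.mul_zero] at this
    omega
  have hrlam : ∀ x : Fin v, lam < (univ.filter fun j => x ∈ B j).card := by
    intro x
    have h := hcount x
    by_contra hle
    push_neg at hle
    have hlt : (univ.filter fun j => x ∈ B j).card * (k - 1) < lam * (v - 1) :=
      calc (univ.filter fun j => x ∈ B j).card * (k - 1)
          ≤ lam * (k - 1) := Nat.mul_le_mul_right _ hle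
        _ < lam * (v - 1) := by
          apply mul_lt_mul_of_pos_left (show k - 1 < v - 1 by omega) (by omega)
    omega
  set f : Fin v → (Fin b → ℚ) := fun x j => if x ∈ B j then 1 else 0 with hfdef
  have hdot_diag : ∀ x, ∑ j : Fin b, f x j * f x j
      = ((univ.filter fun j => x ∈ B j).card : ℚ) := by
    intro x
    have h1 : ∀ j, f x j * f x j = if x ∈ B j then (1:ℚ) else 0 := by
      intro j; by_cases h : x ∈ B j <;> simp [hfdef, h]
    rw [Finset.sum_congr rfl fun j _ => h1 j, Finset.sum_boole]
  have hdot_off : ∀ x y, x ≠ y → ∑ j : Fin b, f x j * f y j = (lam : ℚ) := by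
    intro x y hxy
    have h1 : ∀ j, f x j * f y j = if x ∈ B j ∧ y ∈ B j then (1:ℚ) else 0 := by
      intro j
      by_cases h1 : x ∈ B j <;> by_cases h2 : y ∈ B j <;> simp [hfdef, h1, h2]
    rw [Finset.sum_congr rfl fun j _ => h1 j, Finset.sum_boole]
    exact_mod_cast hpair x y hxy
  have hli : LinearIndependent ℚ f := by
    rw [Fintype.linearIndependent_iff]
    intro g hg x
    have hzero : ∀ j : Fin b, ∑ x : Fin v, g x * f x j = 0 := by
      intro j
      have := congrFun hg j
      simpa using this
    have hS : (0:ℚ) = ∑ x : Fin v, ∑ y : Fin v, g x * g y * (∑ j : Fin b, f x j * f y j) := by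
      have e0 : (0:ℚ) = ∑ j : Fin b, (∑ x : Fin v, g x * f x j) * (∑ y : Fin v, g y * f y j) := by
        simp [hzero]
      rw [e0]
      calc ∑ j : Fin b, (∑ x : Fin v, g x * f x j) * (∑ y : Fin v, g y * f y j)
          = ∑ j : Fin b, ∑ x : Fin v, ∑ y : Fin v, (g x * f x j) * (g y * f y j) := by
            apply Finset.sum_congr rfl; intro j _; rw [Finset.sum_mul_sum]
        _ = ∑ x : Fin v, ∑ j : Fin b, ∑ y : Fin v, (g x * f x j) * (g y * f y j) :=
            Finset.sum_comm
        _ = ∑ x : Fin v, ∑ y : Fin v, ∑ j : Fin b, (g x * f x j) * (g y * f y j) := by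
            exact Finset.sum_congr rfl fun x _ => Finset.sum_comm
        _ = ∑ x : Fin v, ∑ y : Fin v, g x * g y * (∑ j : Fin b, f x j * f y j) := by
            apply Finset.sum_congr rfl; intro x _
            apply Finset.sum_congr rfl; intro y _
            rw [Finset.mul_sum]
            apply Finset.sum_congr rfl; intro j _; ring
    have hsplit : ∑ x : Fin v, ∑ y : Fin v, g x * g y * (∑ j : Fin b, f x j * f y j)
        = ∑ x : Fin v, g x ^ 2 * (((univ.filter fun j => x ∈ B j).card : ℚ) - lam)
          + lam * (∑ x : Fin v, g x) ^ 2 := by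
      have h1 : ∀ x : Fin v, ∑ y : Fin v, g x * g y * (∑ j : Fin b, f x j * f y j)
          = g x ^ 2 * (((univ.filter fun j => x ∈ B j).card : ℚ) - lam)
            + lam * (g x * ∑ y : Fin v, g y) := by
        intro x
        rw [← Finset.sum_erase_add _ _ (Finset.mem_univ x)]
        have herase : ∑ y ∈ univ.erase x, g x * g y * (∑ j : Fin b, f x j * f y j)
            = lam * ∑ y ∈ univ.erase x, g x * g y := by
          rw [Finset.mul_sum]
          apply Finset.sum_congr rfl
          intro y hy
          rw [hdot_off x y (Ne.symm (Finset.ne_of_mem_erase hy))]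
          ring
        rw [herase, hdot_diag x]
        have hsum : ∑ y ∈ univ.erase x, g x * g y
            = g x * ∑ y : Fin v, g y - g x * g x := by
          rw [← Finset.mul_sum, ← Finset.sum_erase_add _ _ (Finset.mem_univ x),
            mul_add]
          ring
        rw [hsum]
        ring
      rw [Finset.sum_congr rfl fun x _ => h1 x, Finset.sum_add_distrib]
      congr 1
      rw [← Finset.mul_sum, ← Finset.sum_mul]
      ring
    rw [hsplit] at hS
    have hA : ∀ x : Fin v,
        (0:ℚ) ≤ g x ^ 2 * (((univ.filter fun j => x ∈ B j).card : ℚ) - lam) := by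
      intro x
      apply mul_nonneg (sq_nonneg _)
      have h := hrlam x
      have h' : (lam : ℚ) < ((univ.filter fun j => x ∈ B j).card : ℚ) := by
        exact_mod_cast h
      linarith
    have hB : (0:ℚ) ≤ (lam : ℚ) * (∑ x : Fin v, g x) ^ 2 := by
      apply mul_nonneg _ (sq_nonneg _)
      exact_mod_cast Nat.zero_le lam
    have hAsum : (0:ℚ)
        ≤ ∑ x : Fin v, g x ^ 2 * (((univ.filter fun j => x ∈ B j).card : ℚ) - lam) :=
      Finset.sum_nonneg fun x _ => hA x
    have hAzero :
        ∑ x : Fin v, g x ^ 2 * (((univ.filter fun j => x ∈ B j).card : ℚ) - lam) = 0 := by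
      linarith
    have hterm := (Finset.sum_eq_zero_iff_of_nonneg fun x _ => hA x).mp hAzero x
      (Finset.mem_univ x)
    have hpos : (0:ℚ) < ((univ.filter fun j => x ∈ B j).card : ℚ) - lam := by
      have h := hrlam x
      have h' : (lam : ℚ) < ((univ.filter fun j => x ∈ B j).card : ℚ) := by
        exact_mod_cast h
      linarith
    have hg2 : g x ^ 2 = 0 := by
      rcases mul_eq_zero.mp hterm with h | h
      · exact h
      · linarith
    exact pow_eq_zero_iff (by norm_num) |>.mp hg2
  have hfin := hli.fintype_card_le_finrank
  simpa using hfin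
end

section
/- Let D be a 2-(v,k,λ) design with v > k > 0 and b = v blocks (a symmetric design), with incidence matrix A. Then every two distinct blocks of D intersect in exactly λ points, and A^T is the incidence matrix of a 2-(v,k,λ) design (the dual design). -/
open Finset

/-- Double counting: summing over rows the number of incident columns equals
summing over columns the number of incident rows. -/
private lemma dcount {α β : Type*} (s : Finset α) (t : Finset β) (p : α → β → Prop)
    [∀ a b, Decidable (p a b)] :
    ∑ a ∈ s, (t.filter fun b => p a b).card = ∑ b ∈ t, (s.filter fun a => p a b).card := by
  simp_rw [Finset.card_filter]
  exact Finset.sum_comm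

/-- In a symmetric 2-(v,k,λ) design (`b = v`, `v > k > 0`), every two
distinct blocks intersect in exactly `λ` points, and the transpose of the incidence
matrix is again the incidence matrix of a 2-(v,k,λ) design (the dual design): each
point lies in exactly `k` blocks and every two distinct blocks share `λ` points. -/
theorem symmetric_design_dual (v k lam : ℕ) (hk0 : 0 < k) (hkv : k < v) (hlam : 1 ≤ lam)
    (B : Fin v → Finset (Fin v))
    (hsize : ∀ j, (B j).card = k)
    (hpair : ∀ x y : Fin v, x ≠ y →
      (Finset.univ.filter fun j => x ∈ B j ∧ y ∈ B j).card = lam) :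
    (∀ i j : Fin v, i ≠ j → (B i ∩ B j).card = lam) ∧
    (∀ x : Fin v, (Finset.univ.filter fun j => x ∈ B j).card = k) := by
  have hv0 : 0 < v := lt_trans hk0 hkv
  -- fundamental identity k(k-1) = (v-1)λ
  have key : k * (k - 1) = (v - 1) * lam := by
    have h := dcount (univ : Finset (Fin v)) (univ.offDiag : Finset (Fin v × Fin v))
      (fun j p => p.1 ∈ B j ∧ p.2 ∈ B j)
    have e1 : ∀ j, ((univ.offDiag : Finset (Fin v × Fin v)).filter
        fun p => p.1 ∈ B j ∧ p.2 ∈ B j) = (B j).offDiag := by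
      intro j; ext ⟨x, y⟩; simp [Finset.mem_offDiag]; tauto
    rw [Finset.sum_congr rfl (fun j _ => by rw [e1 j])] at h
    have hL : ∑ j : Fin v, ((B j).offDiag).card = v * (k * (k - 1)) := by
      have : ∀ j : Fin v, ((B j).offDiag).card = k * (k - 1) := by
        intro j
        rw [Finset.offDiag_card, hsize j, Nat.mul_sub_one]
      rw [Finset.sum_congr rfl (fun j _ => this j), Finset.sum_const, card_univ,
        Fintype.card_fin, smul_eq_mul]
    have hR : ∑ p ∈ (univ.offDiag : Finset (Fin v × Fin v)),
        (univ.filter fun j => p.1 ∈ B j ∧ p.2 ∈ B j).card = v * ((v - 1) * lam) := by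
      have : ∀ p ∈ (univ.offDiag : Finset (Fin v × Fin v)),
          (univ.filter fun j => p.1 ∈ B j ∧ p.2 ∈ B j).card = lam := by
        intro p hp
        exact hpair p.1 p.2 (Finset.mem_offDiag.1 hp).2.2
      rw [Finset.sum_congr rfl this, Finset.sum_const, Finset.offDiag_card, card_univ,
        Fintype.card_fin, smul_eq_mul]
      have : v * v - v = v * (v - 1) := by
        cases v with
        | zero => simp
        | succ m => simp [Nat.succ_mul, Nat.mul_succ]
      rw [this, mul_assoc]
    rw [hL, hR] at h
    exact Nat.eq_of_mul_eq_mul_left hv0 h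
  have hk2 : 2 ≤ k := by
    by_contra hc
    have hk1 : k = 1 := by omega
    rw [hk1] at key
    have : 0 < (v - 1) * lam := Nat.mul_pos (by omega) hlam
    omega
  -- replication number: each point lies in exactly k blocks
  have hr : ∀ x : Fin v, (univ.filter fun j => x ∈ B j).card = k := by
    intro x
    have h := dcount (univ.erase x) (univ : Finset (Fin v))
      (fun y j => x ∈ B j ∧ y ∈ B j)
    have hL : ∑ y ∈ univ.erase x, (univ.filter fun j => x ∈ B j ∧ y ∈ B j).card
        = (v - 1) * lam := by
      have : ∀ y ∈ univ.erase x, (univ.filter fun j => x ∈ B j ∧ y ∈ B j).card = lam := by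
        intro y hy
        have hxy : x ≠ y := fun h => (Finset.mem_erase.1 hy).1 h.symm
        rw [← hpair x y hxy]
      rw [Finset.sum_congr rfl this, Finset.sum_const, Finset.card_erase_of_mem (mem_univ x),
        card_univ, Fintype.card_fin, smul_eq_mul]
    have hR : ∑ j : Fin v, ((univ.erase x).filter fun y => x ∈ B j ∧ y ∈ B j).card
        = (univ.filter fun j => x ∈ B j).card * (k - 1) := by
      have : ∀ j : Fin v, ((univ.erase x).filter fun y => x ∈ B j ∧ y ∈ B j).card
          = if x ∈ B j then k - 1 else 0 := by
        intro j
        by_cases hx : x ∈ B j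
        · rw [if_pos hx]
          have : (univ.erase x).filter (fun y => x ∈ B j ∧ y ∈ B j) = (B j).erase x := by
            ext y; simp [Finset.mem_erase, hx]
          rw [this, Finset.card_erase_of_mem hx, hsize j]
        · rw [if_neg hx]
          rw [Finset.card_eq_zero]
          ext y; simp [hx]
      rw [Finset.sum_congr rfl (fun j _ => this j), Finset.sum_ite, Finset.sum_const,
        Finset.sum_const, smul_eq_mul, smul_eq_mul, mul_zero, add_zero]
    rw [hL, hR, ← key] at h
    exact (Nat.eq_of_mul_eq_mul_right (by omega) h.symm)
  refine ⟨?_, hr⟩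
  intro i j hij
  set n : Fin v → ℕ := fun l => (B i ∩ B l).card with hn
  -- sum of intersection sizes
  have hsum1 : ∑ l ∈ univ.erase i, n l = k * (k - 1) := by
    have h := dcount (univ.erase i) (B i) (fun l x => x ∈ B l)
    have hL : ∑ l ∈ univ.erase i, ((B i).filter fun x => x ∈ B l).card
        = ∑ l ∈ univ.erase i, n l := by
      apply Finset.sum_congr rfl
      intro l _
      congr 1
    have hR : ∑ x ∈ B i, ((univ.erase i).filter fun l => x ∈ B l).card = k * (k - 1) := by
      have : ∀ x ∈ B i, ((univ.erase i).filter fun l => x ∈ B l).card = k - 1 := by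
        intro x hx
        have e : (univ.erase i).filter (fun l => x ∈ B l)
            = (univ.filter fun l => x ∈ B l).erase i := by
          ext l; simp [Finset.mem_erase]
        rw [e, Finset.card_erase_of_mem (by simp [hx]), hr x]
      rw [Finset.sum_congr rfl this, Finset.sum_const, hsize i, smul_eq_mul]
    rw [hL, hR] at h
    exact h.symm ▸ h
  -- sum of n l * (n l - 1)
  have hsum2 : ∑ l ∈ univ.erase i, (n l * n l - n l) = k * (k - 1) * (lam - 1) := by
    have h := dcount (univ.erase i) ((B i).offDiag)
      (fun l p => p.1 ∈ B l ∧ p.2 ∈ B l)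
    have hL : ∑ l ∈ univ.erase i, (((B i).offDiag).filter
        fun p => p.1 ∈ B l ∧ p.2 ∈ B l).card = ∑ l ∈ univ.erase i, (n l * n l - n l) := by
      apply Finset.sum_congr rfl
      intro l _
      have e : ((B i).offDiag).filter (fun p => p.1 ∈ B l ∧ p.2 ∈ B l)
          = (B i ∩ B l).offDiag := by
        ext ⟨x, y⟩; simp [Finset.mem_offDiag]; tauto
      rw [e, Finset.offDiag_card]
    have hR : ∑ p ∈ (B i).offDiag, ((univ.erase i).filter
        fun l => p.1 ∈ B l ∧ p.2 ∈ B l).card = k * (k - 1) * (lam - 1) := by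
      have hterm : ∀ p ∈ (B i).offDiag, ((univ.erase i).filter
          fun l => p.1 ∈ B l ∧ p.2 ∈ B l).card = lam - 1 := by
        intro p hp
        obtain ⟨h1, h2, h3⟩ := Finset.mem_offDiag.1 hp
        have e : (univ.erase i).filter (fun l => p.1 ∈ B l ∧ p.2 ∈ B l)
            = (univ.filter fun l => p.1 ∈ B l ∧ p.2 ∈ B l).erase i := by
          ext l; simp [Finset.mem_erase]
        rw [e, Finset.card_erase_of_mem (by simp [h1, h2]), hpair p.1 p.2 h3]
      rw [Finset.sum_congr rfl hterm, Finset.sum_const, Finset.offDiag_card, hsize i,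
        smul_eq_mul]
      congr 1
      cases k with
      | zero => simp
      | succ m => simp [Nat.succ_mul, Nat.mul_succ]
    rw [hL, hR] at h
    exact h
  -- sum of squares
  have hsq : ∑ l ∈ univ.erase i, n l * n l = k * (k - 1) * lam := by
    have e : ∀ l ∈ univ.erase i, n l * n l = (n l * n l - n l) + n l := by
      intro l _
      have hle : n l ≤ n l * n l := by
        rcases Nat.eq_zero_or_pos (n l) with h0 | h0
        · simp [h0]
        · exact Nat.le_mul_of_pos_left _ h0
      omega
    rw [Finset.sum_congr rfl e, Finset.sum_add_distrib, hsum1, hsum2]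
    have : lam - 1 + 1 = lam := Nat.succ_pred_eq_of_pos hlam
    calc k * (k - 1) * (lam - 1) + k * (k - 1) = k * (k - 1) * ((lam - 1) + 1) := by ring
      _ = k * (k - 1) * lam := by rw [this]
  -- variance argument over ℤ
  have hcard : (univ.erase i).card = v - 1 := by
    rw [Finset.card_erase_of_mem (mem_univ i), card_univ, Fintype.card_fin]
  have hz : ∑ l ∈ univ.erase i, ((n l : ℤ) - lam) ^ 2 = 0 := by
    have expand : ∑ l ∈ univ.erase i, ((n l : ℤ) - lam) ^ 2
        = (∑ l ∈ univ.erase i, ((n l : ℤ) * n l))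
          - 2 * lam * (∑ l ∈ univ.erase i, (n l : ℤ))
          + ((v : ℤ) - 1) * lam ^ 2 := by
      have : ∀ l ∈ univ.erase i, ((n l : ℤ) - lam) ^ 2
          = (n l : ℤ) * n l - 2 * lam * n l + (lam : ℤ) ^ 2 := by
        intro l _; ring
      rw [Finset.sum_congr rfl this, Finset.sum_add_distrib, Finset.sum_sub_distrib,
        Finset.sum_const, hcard, Finset.mul_sum, nsmul_eq_mul]
      push_cast [Nat.cast_sub (by omega : 1 ≤ v)]
      ring
    have c1 : (∑ l ∈ univ.erase i, ((n l : ℤ) * n l)) = (k : ℤ) * (k - 1) * lam := by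
      have := congrArg (Nat.cast : ℕ → ℤ) hsq
      push_cast [Nat.cast_sub (by omega : 1 ≤ k)] at this
      rw [← this]
    have c2 : (∑ l ∈ univ.erase i, (n l : ℤ)) = (k : ℤ) * (k - 1) := by
      have := congrArg (Nat.cast : ℕ → ℤ) hsum1
      push_cast [Nat.cast_sub (by omega : 1 ≤ k)] at this
      rw [← this]
    have ckey : (k : ℤ) * (k - 1) = ((v : ℤ) - 1) * lam := by
      have := congrArg (Nat.cast : ℕ → ℤ) key
      push_cast [Nat.cast_sub (by omega : 1 ≤ k), Nat.cast_sub (by omega : 1 ≤ v)] at this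
      exact this
    rw [expand, c1, c2, ckey]
    ring
  have hmem : j ∈ univ.erase i := Finset.mem_erase.2 ⟨hij.symm, mem_univ j⟩
  have hzero := (Finset.sum_eq_zero_iff_of_nonneg
    (fun l _ => sq_nonneg ((n l : ℤ) - lam))).1 hz j hmem
  have : (n j : ℤ) = lam := by
    have := pow_eq_zero_iff (n := 2) (by norm_num) |>.1 hzero
    linarith [sub_eq_zero.1 this]
  exact_mod_cast this
end

section
/- Let D be a resolvable 2-(qk, k, λ) design with q > 1, k > 0. Then the number of blocks satisfies b ≥ v + r − 1, where v = qk and r = λ(v−1)/(k−1) is the replication number (Bose's inequality). -/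
/-!
Bose's argument. The Gram matrix of the point–block incidence matrix `N` is
`N Nᵀ = (r - λ) I + λ J`, positive definite because `r > λ`, so `rank N = v`. Let `P` be the
block–class incidence matrix of the resolution, of rank `r`. Every point lies in exactly one block
of each class, so `N P = J` has rank one, and Sylvester's rank inequality
`rank N + rank P ≤ rank (N P) + b` gives `v + r ≤ 1 + b`.
-/

open Finset Matrix Module

namespace LinearMap

variable {K U V W : Type*} [Field K] [AddCommGroup U] [Module K U] [AddCommGroup V] [Module K V]
  [AddCommGroup W] [Module K W] [FiniteDimensional K V]

theorem finrank_range_add_finrank_range_le (f : V →ₗ[K] W) (g : U →ₗ[K] V) :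
    finrank K (range f) + finrank K (range g) ≤ finrank K (range (f ∘ₗ g)) + finrank K V := by
  set h := f.domRestrict (range g)
  have h_range : range h = range (f ∘ₗ g) := by rw [range_domRestrict, range_comp]
  have h_ker : finrank K (ker h) ≤ finrank K (ker f) := by
    rw [ker_domRestrict, ← Submodule.finrank_map_subtype_eq]
    exact Submodule.finrank_mono (by simp)
  have := h.finrank_range_add_finrank_ker
  have := f.finrank_range_add_finrank_ker
  rw [h_range] at *
  omega

end LinearMap

theorem Matrix.rank_add_rank_le_rank_mul_add_card {K l m n : Type*} [Field K] [Fintype m]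
    [Fintype n] (A : Matrix l m K) (B : Matrix m n K) :
    A.rank + B.rank ≤ (A * B).rank + Fintype.card m := by
  have := A.mulVecLin.finrank_range_add_finrank_range_le B.mulVecLin
  rwa [← Matrix.mulVecLin_mul, Module.finrank_fintype_fun_eq_card] at this

theorem Matrix.rank_one_submatrix_of_surjective {R β γ : Type*} [CommRing R]
    [StrongRankCondition R] [Fintype γ] [DecidableEq γ] {f : β → γ}
    (hf : Function.Surjective f) :
    ((1 : Matrix γ γ R).submatrix f id).rank = Fintype.card γ := by
  refine le_antisymm (rank_le_card_width _) ?_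
  have := rank_submatrix_le ((1 : Matrix γ γ R).submatrix f id) (Function.surjInv hf) id
  rwa [submatrix_submatrix, Function.comp_id, Function.comp_surjInv, submatrix_id_id,
    rank_one] at this

section Design

variable {α β γ : Type*} (R : Type*) (B : β → Finset α)

def IsResolution (res : β → γ) : Prop :=
  ∀ c x, ∃! j, res j = c ∧ x ∈ B j

theorem IsResolution.surjective {B : β → Finset α} {res : β → γ} (hres : IsResolution B res)
    [Nonempty α] : Function.Surjective res := fun c =>
  (hres c (Classical.arbitrary α)).exists.imp fun _ h => h.1

variable [DecidableEq α]

def incidenceMatrix [Zero R] [One R] : Matrix α β R :=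
  Matrix.of fun x j => if x ∈ B j then 1 else 0

variable {R B} [Fintype β]

theorem incidenceMatrix_mul_transpose_apply [NonAssocSemiring R] (x y : α) :
    (incidenceMatrix R B * (incidenceMatrix R B)ᵀ) x y = #{j | x ∈ B j ∧ y ∈ B j} := by
  simp only [incidenceMatrix, mul_apply, transpose_apply, of_apply, ite_zero_mul_ite_zero, mul_one,
    sum_boole]

theorem rank_incidenceMatrix_eq_card [Fintype α] {r lam : ℕ} (hrep : ∀ x, #{j | x ∈ B j} = r)
    (hpair : ∀ x y, x ≠ y → #{j | x ∈ B j ∧ y ∈ B j} = lam) (hlt : lam < r) :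
    (incidenceMatrix ℝ B).rank = Fintype.card α := by
  have hgram : incidenceMatrix ℝ B * (incidenceMatrix ℝ B)ᵀ =
      ((r : ℝ) - lam) • 1 + (lam : ℝ) • vecMulVec 1 1 := by
    ext x y
    rw [incidenceMatrix_mul_transpose_apply]
    rcases eq_or_ne x y with rfl | hxy
    · simp [hrep]
    · simp [hpair x y hxy, hxy]
  have hposDef : (incidenceMatrix ℝ B * (incidenceMatrix ℝ B)ᵀ).PosDef := by
    rw [hgram]
    exact (PosDef.one.smul (sub_pos.2 (Nat.cast_lt.2 hlt))).add_posSemidef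
      ((posSemidef_vecMulVec_self_star 1).smul (Nat.cast_nonneg lam))
  rw [← rank_self_mul_transpose, rank_of_isUnit _ hposDef.isUnit]

theorem card_filter_mem_and_mem_lt {x y : α} {j : β} (hx : x ∈ B j) (hy : y ∉ B j) :
    #{j | x ∈ B j ∧ y ∈ B j} < #{j | x ∈ B j} :=
  card_lt_card <| (ssubset_iff_of_subset (monotone_filter_right _ fun _ _ => And.left)).2
    ⟨j, by simp [hx], by simp [hy]⟩

namespace IsResolution

variable {res : β → γ} (hres : IsResolution B res)
include hres

theorem card_filter_mem [Fintype γ] (x : α) : #{j | x ∈ B j} = Fintype.card γ := by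
  rw [← card_univ]
  refine card_nbij res (fun _ _ => mem_univ _) (fun j₁ h₁ j₂ h₂ h => ?_) fun c _ => ?_
  · simp only [coe_filter, mem_univ, true_and, Set.mem_ofPred_eq] at h₁ h₂
    exact (hres (res j₁) x).unique ⟨rfl, h₁⟩ ⟨h.symm, h₂⟩
  · obtain ⟨j, ⟨hc, hx⟩, -⟩ := hres c x
    exact ⟨j, by simpa using hx, hc⟩

theorem incidenceMatrix_mul_submatrix_one [NonAssocSemiring R] [DecidableEq γ] :
    incidenceMatrix R B * (1 : Matrix γ γ R).submatrix res id = vecMulVec 1 1 := by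
  ext x c
  obtain ⟨j, hj, huniq⟩ := hres c x
  rw [mul_apply, sum_eq_single j]
  · simp [incidenceMatrix, ← hj.1, hj.2, one_apply]
  · intro j' _ hne
    simpa [incidenceMatrix, one_apply] using fun hc hx => absurd (huniq j' ⟨hc, hx⟩) hne
  · simp

end IsResolution

end Design

/-- Bose's inequality: A resolvable 2-(qk, k, λ) design with `q > 1`,
`k > 0` and `r` parallel classes satisfies `b ≥ v + r - 1`, i.e. `v + r ≤ b + 1`. -/
theorem bose_inequality (q k lam b r : ℕ) (hq : 1 < q) (hk : 0 < k) (hlam : 1 ≤ lam)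
    (B : Fin b → Finset (Fin (q * k)))
    (hsize : ∀ j, (B j).card = k)
    (hpair : ∀ x y : Fin (q * k), x ≠ y →
      (Finset.univ.filter fun j => x ∈ B j ∧ y ∈ B j).card = lam)
    (res : Fin b → Fin r)
    (hres : ∀ (c : Fin r) (x : Fin (q * k)), ∃! j, res j = c ∧ x ∈ B j) :
    q * k + r ≤ b + 1 := by
  replace hres : IsResolution B res := hres
  have hv : k < q * k := lt_mul_left hk hq
  have hrep (x : Fin (q * k)) : #{j | x ∈ B j} = r := by
    rw [hres.card_filter_mem, Fintype.card_fin]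
  have : Nontrivial (Fin (q * k)) := Fin.nontrivial_iff_two_le.2 (by nlinarith)
  have hlt : lam < r := by
    obtain ⟨x₀, x₁, hx⟩ := exists_pair_ne (Fin (q * k))
    obtain ⟨j, hj⟩ : ∃ j, x₀ ∈ B j := by
      obtain ⟨j, hj⟩ := card_pos.1 (hpair x₀ x₁ hx ▸ hlam)
      exact ⟨j, (mem_filter.1 hj).2.1⟩
    -- a block through `x₀` misses some `y`, so fewer blocks contain `x₀` and `y` than `x₀`
    obtain ⟨y, hy⟩ : ∃ y, y ∉ B j := by
      by_contra! h
      exact (B j).card_lt_iff_ne_univ.1 (by rwa [hsize j, Fintype.card_fin]) (eq_univ_of_forall h)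
    rw [← hpair x₀ y (ne_of_mem_of_not_mem hj hy), ← hrep x₀]
    exact card_filter_mem_and_mem_lt hj hy
  have hsylvester := rank_add_rank_le_rank_mul_add_card (incidenceMatrix ℝ B)
    ((1 : Matrix (Fin r) (Fin r) ℝ).submatrix res id)
  rw [hres.incidenceMatrix_mul_submatrix_one, rank_incidenceMatrix_eq_card hrep hpair hlt,
    rank_one_submatrix_of_surjective hres.surjective, Fintype.card_fin, Fintype.card_fin,
    Fintype.card_fin] at hsylvester
  have := rank_vecMulVec_le (1 : Fin (q * k) → ℝ) (1 : Fin r → ℝ)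
  omega
end

section
/- Let D be a resolvable 2-(qk, k, λ) design with b = v + r − 1 (an affine resolvable design). Then μ = k²/v = k/q is a positive integer, and every two blocks of D from different parallel classes intersect in exactly μ points. -/
open Finset

lemma affres_sum_inter_card {n b : ℕ} (S : Finset (Fin b)) (A : Finset (Fin n))
    (B : Fin b → Finset (Fin n)) :
    ∑ j ∈ S, (A ∩ B j).card = ∑ x ∈ A, (S.filter fun j => x ∈ B j).card := by
  simp_rw [Finset.card_filter, ← Finset.filter_mem_eq_inter, Finset.card_filter]
  exact Finset.sum_comm

lemma affres_sum_inter_card_sq {n b : ℕ} (S : Finset (Fin b)) (A : Finset (Fin n))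
    (B : Fin b → Finset (Fin n)) :
    ∑ j ∈ S, (A ∩ B j).card ^ 2
      = ∑ x ∈ A, ∑ y ∈ A, (S.filter fun j => x ∈ B j ∧ y ∈ B j).card := by
  have h1 : ∀ j, (A ∩ B j).card ^ 2
      = ∑ x ∈ A, ∑ y ∈ A, if x ∈ B j ∧ y ∈ B j then 1 else 0 := by
    intro j
    rw [← Finset.filter_mem_eq_inter, Finset.card_filter, sq, Finset.sum_mul_sum]
    simp [ite_and]
  simp_rw [h1, Finset.card_filter]
  rw [Finset.sum_comm]
  refine Finset.sum_congr rfl fun x _ => Finset.sum_comm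

lemma affres_alg (q k lam r : ℤ) (hq : 2 ≤ q) (hr : 1 ≤ r)
    (hqr : q * r + 1 = q * k + r) (hrk : r * (k - 1) = lam * (q * k - 1)) :
    q ^ 2 * (k * r + k * ((k - 1) * lam) - k * k) - 2 * q * k * (k * r - k)
      + k ^ 2 * (q * r - q) = 0 := by
  have hr1 : r * (q - 1) = q * k - 1 := by linarith
  have hl : lam * (q - 1) = k - 1 := by
    have h2 : r * (lam * (q - 1)) = r * (k - 1) := by
      rw [hrk, ← hr1]; ring
    have := mul_left_cancel₀ (by linarith : r ≠ 0) h2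
    linarith
  have hE : (q - 1) * (q * (k - 1) * (lam - 1) - (k - q) * (r - 1)) = 0 := by
    linear_combination q * (k - 1) * hl - (k - q) * hr1
  have hE0 : q * (k - 1) * (lam - 1) - (k - q) * (r - 1) = 0 := by
    rcases mul_eq_zero.mp hE with h | h
    · linarith
    · exact h
  linear_combination q * k * hE0

/-- In an affine resolvable 2-(qk, k, λ) design (resolvable with
`b = v + r - 1`), the number `μ = k/q = k²/v` is a positive integer, and any two
blocks from different parallel classes intersect in exactly `μ` points. -/
theorem affine_resolvable_intersections (q k lam b r : ℕ) (hq : 1 < q) (hk : 0 < k)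
    (hlam : 1 ≤ lam)
    (B : Fin b → Finset (Fin (q * k)))
    (hsize : ∀ j, (B j).card = k)
    (hpair : ∀ x y : Fin (q * k), x ≠ y →
      (Finset.univ.filter fun j => x ∈ B j ∧ y ∈ B j).card = lam)
    (res : Fin b → Fin r)
    (hres : ∀ (c : Fin r) (x : Fin (q * k)), ∃! j, res j = c ∧ x ∈ B j)
    (hb : b + 1 = q * k + r) :
    q ∣ k ∧ 0 < k / q ∧
      ∀ i j : Fin b, res i ≠ res j → (B i ∩ B j).card = k / q := by
  have hq0 : 0 < q := by omega
  have hv : 0 < q * k := Nat.mul_pos hq0 hk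
  -- k ≥ 2
  have hk2 : 2 ≤ k := by
    by_contra h
    have hk1 : k = 1 := by omega
    subst hk1
    have h2 : 2 ≤ q * 1 := by omega
    set x : Fin (q * 1) := ⟨0, by omega⟩
    set y : Fin (q * 1) := ⟨1, by omega⟩
    have hxy : x ≠ y := by simp [x, y, Fin.ext_iff]
    have hcard := hpair x y hxy
    have hne : (Finset.univ.filter fun j => x ∈ B j ∧ y ∈ B j).Nonempty := by
      rw [← Finset.card_pos, hcard]; omega
    obtain ⟨j, hj⟩ := hne
    simp only [Finset.mem_filter] at hj
    exact hxy (Finset.card_le_one.mp (le_of_eq (hsize j)) x hj.2.1 y hj.2.2)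
  -- point degree r
  have hrow : ∀ x : Fin (q * k), (univ.filter fun j => x ∈ B j).card = r := by
    intro x
    have hb' := Finset.card_bij (s := univ.filter fun j => x ∈ B j)
      (t := (univ : Finset (Fin r))) (fun j _ => res j) ?_ ?_ ?_
    · simpa using hb'
    · intro a ha; exact mem_univ _
    · intro a ha a' ha' hab
      simp only [mem_filter] at ha ha'
      obtain ⟨j0, -, hu⟩ := hres (res a) x
      rw [hu a ⟨rfl, ha.2⟩, hu a' ⟨hab.symm, ha'.2⟩]
    · intro c _
      obtain ⟨j0, ⟨hc, hx⟩, -⟩ := hres c x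
      exact ⟨j0, by simp [hx], hc⟩
  -- class size q
  have hclass : ∀ c : Fin r, (univ.filter fun j => res j = c).card = q := by
    intro c
    have h1 := affres_sum_inter_card (univ.filter fun j => res j = c)
      (univ : Finset (Fin (q * k))) B
    simp only [Finset.univ_inter, hsize, Finset.sum_const, smul_eq_mul] at h1
    have h2 : ∀ x : Fin (q * k),
        ((univ.filter fun j => res j = c).filter fun j => x ∈ B j).card = 1 := by
      intro x
      rw [Finset.filter_filter, Finset.card_eq_one]
      obtain ⟨j0, ⟨hc, hx⟩, hu⟩ := hres c x
      refine ⟨j0, ?_⟩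
      ext a
      simp only [mem_filter, mem_univ, true_and, mem_singleton]
      constructor
      · rintro ⟨ha1, ha2⟩; exact hu a ⟨ha1, ha2⟩
      · rintro rfl; exact ⟨hc, hx⟩
    rw [Finset.sum_congr rfl (fun x _ => h2 x), Finset.sum_const, card_univ,
      Fintype.card_fin, smul_eq_mul, mul_one] at h1
    exact Nat.eq_of_mul_eq_mul_right hk h1
  -- b = q * r
  have hbqr : b = q * r := by
    have h := Finset.card_eq_sum_card_fiberwise
      (f := res) (s := (univ : Finset (Fin b))) (t := univ) (fun x _ => mem_univ _)
    rw [card_univ, Fintype.card_fin] at h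
    rw [h, Finset.sum_congr rfl (fun c _ => hclass c), Finset.sum_const, card_univ,
      Fintype.card_fin, smul_eq_mul, Nat.mul_comm]
  have hqr : q * r + 1 = q * k + r := by rw [hbqr] at hb; exact hb
  have hr2 : 2 ≤ r := by
    by_contra h
    push_neg at h
    interval_cases r
    · have h4 : 4 ≤ q * k := Nat.mul_le_mul (show 2 ≤ q by omega) hk2
      linarith [hqr, h4]
    · have h4 : q * 2 ≤ q * k := Nat.mul_le_mul_left q hk2
      linarith [hqr, h4, hq]
  -- replication identity r(k-1) = lam(qk-1)
  have hrk : r * (k - 1) = lam * (q * k - 1) := by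
    set x0 : Fin (q * k) := ⟨0, hv⟩
    set S0 := univ.filter fun j => x0 ∈ B j with hS0
    have h1 := affres_sum_inter_card S0 ((univ : Finset (Fin (q * k))).erase x0) B
    have hL : ∀ j ∈ S0, ((univ : Finset (Fin (q * k))).erase x0 ∩ B j).card = k - 1 := by
      intro j hj
      simp only [hS0, mem_filter] at hj
      have : (univ : Finset (Fin (q * k))).erase x0 ∩ B j = (B j).erase x0 := by
        ext a
        simp only [Finset.mem_inter, Finset.mem_erase, mem_univ, and_true, true_and]
      rw [this, Finset.card_erase_of_mem hj.2, hsize]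
    have hR : ∀ y ∈ (univ : Finset (Fin (q * k))).erase x0,
        (S0.filter fun j => y ∈ B j).card = lam := by
      intro y hy
      have hyx : x0 ≠ y := (Finset.ne_of_mem_erase hy).symm
      rw [hS0, Finset.filter_filter]
      exact hpair x0 y hyx
    rw [Finset.sum_congr rfl hL, Finset.sum_congr rfl hR, Finset.sum_const,
      Finset.sum_const, smul_eq_mul, smul_eq_mul] at h1
    rw [hS0] at h1
    rw [hrow x0, Finset.card_erase_of_mem (mem_univ x0), card_univ, Fintype.card_fin] at h1
    exact h1.trans (Nat.mul_comm _ _)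
  -- main key: blocks in different classes meet in exactly k/q points
  have key : ∀ i j : Fin b, res j ≠ res i → q * (B i ∩ B j).card = k := by
    intro i
    set S := univ.filter fun j => ¬ res j = res i with hS
    suffices h : ∀ j ∈ S, q * (B i ∩ B j).card = k by
      intro j hj; exact h j (by simp [hS, hj])
    have hScard : S.card + q = b := by
      have hsplit := Finset.card_filter_add_card_filter_not
        (s := (univ : Finset (Fin b))) (p := fun j => res j = res i)
      rw [hclass (res i), card_univ, Fintype.card_fin, ← hS] at hsplit
      omega
    -- each point is in exactly r - 1 blocks of S
    have d1 : ∀ x : Fin (q * k), (S.filter fun j => x ∈ B j).card + 1 = r := by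
      intro x
      have hsplit := Finset.card_filter_add_card_filter_not
        (s := univ.filter fun j => x ∈ B j) (p := fun j => res j = res i)
      rw [hrow x] at hsplit
      have hone : ((univ.filter fun j => x ∈ B j).filter fun j => res j = res i).card = 1 := by
        rw [Finset.filter_filter, Finset.card_eq_one]
        obtain ⟨j0, ⟨hc, hx⟩, hu⟩ := hres (res i) x
        refine ⟨j0, ?_⟩
        ext a
        simp only [mem_filter, mem_univ, true_and, mem_singleton]
        constructor
        · rintro ⟨ha1, ha2⟩; exact hu a ⟨ha2, ha1⟩
        · rintro rfl; exact ⟨hx, hc⟩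
      have heq : (S.filter fun j => x ∈ B j)
          = ((univ.filter fun j => x ∈ B j).filter fun j => ¬ res j = res i) := by
        ext a
        simp only [hS, Finset.mem_filter, mem_univ, true_and]
        tauto
      rw [heq]
      omega
    -- each pair of distinct points of B i is in exactly lam - 1 blocks of S
    have d2 : ∀ x ∈ B i, ∀ y ∈ B i, x ≠ y →
        (S.filter fun j => x ∈ B j ∧ y ∈ B j).card + 1 = lam := by
      intro x hx y hy hxy
      have hsplit := Finset.card_filter_add_card_filter_not
        (s := univ.filter fun j => x ∈ B j ∧ y ∈ B j) (p := fun j => res j = res i)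
      rw [hpair x y hxy] at hsplit
      have hone : ((univ.filter fun j => x ∈ B j ∧ y ∈ B j).filter
          fun j => res j = res i).card = 1 := by
        rw [Finset.filter_filter, Finset.card_eq_one]
        obtain ⟨j0, -, hu⟩ := hres (res i) x
        have hji : j0 = i := (hu i ⟨rfl, hx⟩).symm
        refine ⟨i, ?_⟩
        ext a
        simp only [mem_filter, mem_univ, true_and, mem_singleton]
        constructor
        · rintro ⟨⟨ha1, ha2⟩, ha3⟩
          exact (hu a ⟨ha3, ha1⟩).trans hji
        · rintro rfl; exact ⟨⟨hx, hy⟩, rfl⟩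
      have heq : (S.filter fun j => x ∈ B j ∧ y ∈ B j)
          = ((univ.filter fun j => x ∈ B j ∧ y ∈ B j).filter fun j => ¬ res j = res i) := by
        ext a
        simp only [hS, Finset.mem_filter, mem_univ, true_and]
        tauto
      rw [heq]
      omega
    -- sum of intersection sizes
    have hsum : (∑ j ∈ S, (B i ∩ B j).card) + k = k * r := by
      rw [affres_sum_inter_card]
      have h := Finset.sum_congr rfl (fun x (_ : x ∈ B i) => d1 x)
      rw [Finset.sum_add_distrib, Finset.sum_const, Finset.sum_const, hsize,
        smul_eq_mul, smul_eq_mul, mul_one] at h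
      linarith
    -- sum of squares of intersection sizes
    have hsq : (∑ j ∈ S, (B i ∩ B j).card ^ 2) + k * k = k * r + k * ((k - 1) * lam) := by
      rw [affres_sum_inter_card_sq]
      have inner : ∀ x ∈ B i,
          (∑ y ∈ B i, (S.filter fun j => x ∈ B j ∧ y ∈ B j).card) + k
            = r + (k - 1) * lam := by
        intro x hx
        have hsplit := (Finset.add_sum_erase (B i)
          (fun y => (S.filter fun j => x ∈ B j ∧ y ∈ B j).card + 1) hx).symm
        have hdiag : (S.filter fun j => x ∈ B j ∧ x ∈ B j).card + 1 = r := by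
          simpa [and_self] using d1 x
        have hoff : ∀ y ∈ (B i).erase x,
            (S.filter fun j => x ∈ B j ∧ y ∈ B j).card + 1 = lam := fun y hy =>
          d2 x hx y (Finset.mem_of_mem_erase hy) (Finset.ne_of_mem_erase hy).symm
        rw [Finset.sum_congr rfl hoff, Finset.sum_const, smul_eq_mul,
          Finset.card_erase_of_mem hx, hsize, hdiag] at hsplit
        rw [Finset.sum_add_distrib, Finset.sum_const, smul_eq_mul, mul_one, hsize] at hsplit
        linarith
      have h := Finset.sum_congr rfl (fun x (hx : x ∈ B i) =>
        congrArg id (inner x hx))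
      simp only [id] at h
      rw [Finset.sum_add_distrib, Finset.sum_const, Finset.sum_const, hsize,
        smul_eq_mul, smul_eq_mul] at h
      have : (∑ x ∈ B i, ∑ y ∈ B i, (S.filter fun j => x ∈ B j ∧ y ∈ B j).card)
          + k * k = k * (r + (k - 1) * lam) := h
      linarith [this]
    -- pass to ℤ and conclude each intersection has size k/q
    have e1 : ∑ j ∈ S, ((B i ∩ B j).card : ℤ) = (k : ℤ) * r - k := by
      have h := congrArg (Nat.cast : ℕ → ℤ) hsum
      push_cast at h
      linarith
    have e2 : ∑ j ∈ S, ((B i ∩ B j).card : ℤ) ^ 2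
        = (k : ℤ) * r + k * ((k - 1) * lam) - k * k := by
      have h := congrArg (Nat.cast : ℕ → ℤ) hsq
      push_cast [Nat.cast_sub (show 1 ≤ k by omega)] at h
      linarith
    have e3 : (S.card : ℤ) = (q : ℤ) * r - q := by
      have h := congrArg (Nat.cast : ℕ → ℤ) hScard
      push_cast at h
      have hb' := congrArg (Nat.cast : ℕ → ℤ) hbqr
      push_cast at hb'
      linarith
    have hqrZ : (q : ℤ) * r + 1 = q * k + r := by exact_mod_cast hqr
    have hrkZ : (r : ℤ) * ((k : ℤ) - 1) = lam * ((q : ℤ) * k - 1) := by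
      have h := congrArg (Nat.cast : ℕ → ℤ) hrk
      push_cast [Nat.cast_sub (show 1 ≤ k by omega), Nat.cast_sub (show 1 ≤ q * k by omega)] at h
      linarith
    have hzero : ∑ j ∈ S, ((q : ℤ) * ((B i ∩ B j).card : ℤ) - k) ^ 2 = 0 := by
      have hexp : ∀ j ∈ S, ((q : ℤ) * ((B i ∩ B j).card : ℤ) - k) ^ 2
          = (q : ℤ) ^ 2 * ((B i ∩ B j).card : ℤ) ^ 2
            - 2 * q * k * ((B i ∩ B j).card : ℤ) + k ^ 2 := fun j _ => by ring
      rw [Finset.sum_congr rfl hexp, Finset.sum_add_distrib, Finset.sum_sub_distrib,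
        ← Finset.mul_sum, ← Finset.mul_sum, Finset.sum_const, nsmul_eq_mul, e1, e2,
        mul_comm (S.card : ℤ) ((k : ℤ) ^ 2), e3]
      exact affres_alg q k lam r (by exact_mod_cast hq) (by
        have : (1 : ℕ) ≤ r := by omega
        exact_mod_cast this) hqrZ hrkZ
    intro j hj
    have hjz := (Finset.sum_eq_zero_iff_of_nonneg (fun j _ => sq_nonneg _)).mp hzero j hj
    have h0 : (q : ℤ) * ((B i ∩ B j).card : ℤ) = k := by
      have := pow_eq_zero_iff (n := 2) (two_ne_zero) |>.mp hjz
      linarith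
    exact_mod_cast h0
  -- extract the three conclusions
  have hbpos : 0 < b := by
    have h4 : 4 ≤ q * r := Nat.mul_le_mul (show 2 ≤ q by omega) hr2
    rw [hbqr]; omega
  set i0 : Fin b := ⟨0, hbpos⟩
  have : Nontrivial (Fin r) := Fin.nontrivial_iff_two_le.mpr hr2
  obtain ⟨c, hc⟩ := exists_ne (res i0)
  obtain ⟨j0, ⟨hc0, -⟩, -⟩ := hres c ⟨0, hv⟩
  have hj0 : ¬ res j0 = res i0 := by rw [hc0]; exact hc
  have hdvd : q ∣ k := ⟨(B i0 ∩ B j0).card, (key i0 j0 hj0).symm⟩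
  refine ⟨hdvd, ?_, ?_⟩
  · obtain ⟨m, hm⟩ := hdvd
    rw [hm, Nat.mul_div_cancel_left m hq0]
    rcases Nat.eq_zero_or_pos m with h | h
    · subst h; simp at hm; omega
    · exact h
  · intro i j hij
    have h := key i j (Ne.symm hij)
    exact (Nat.div_eq_of_eq_mul_left hq0 (h.symm.trans (Nat.mul_comm _ _))).symm
end

section
/- The parameters of an affine resolvable 2-design can be written as v = q²μ, k = qμ, λ = (qμ−1)/(q−1) for integers q ≥ 2 and μ ≥ 1: that is, if D is an affine resolvable 2-(qk,k,λ) design with μ = k/q, then v = q²μ, k = qμ, and λ(q−1) = qμ−1. -/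
open Finset

/-- The parameters of an affine resolvable 2-(qk,k,λ) design can be
written as `v = q²μ`, `k = qμ`, `λ = (qμ-1)/(q-1)` where `μ = k/q`. -/
theorem affine_resolvable_parameters (q k lam b r : ℕ) (hq : 1 < q) (hk : 0 < k)
    (hlam : 1 ≤ lam)
    (B : Fin b → Finset (Fin (q * k)))
    (hsize : ∀ j, (B j).card = k)
    (hpair : ∀ x y : Fin (q * k), x ≠ y →
      (Finset.univ.filter fun j => x ∈ B j ∧ y ∈ B j).card = lam)
    (res : Fin b → Fin r)
    (hres : ∀ (c : Fin r) (x : Fin (q * k)), ∃! j, res j = c ∧ x ∈ B j)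
    (hb : b + 1 = q * k + r)
    (hdvd : q ∣ k) :
    q * k = q ^ 2 * (k / q) ∧ k = q * (k / q) ∧ lam * (q - 1) = q * (k / q) - 1 := by
  have hkq : q * (k / q) = k := Nat.mul_div_cancel' hdvd
  have hv2 : 2 ≤ q * k := by
    calc 2 = 2 * 1 := by norm_num
    _ ≤ q * k := Nat.mul_le_mul hq hk
  -- each point lies in exactly r blocks
  have hrep : ∀ x : Fin (q * k), (Finset.univ.filter fun j => x ∈ B j).card = r := by
    intro x
    have : r = (Finset.univ : Finset (Fin r)).card := by simp
    rw [this]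
    apply Finset.card_bij (fun j _ => res j)
    · intro a ha; exact mem_univ _
    · intro j1 h1 j2 h2 heq
      obtain ⟨j0, _, huniq⟩ := hres (res j1) x
      have e1 := huniq j1 ⟨rfl, (mem_filter.1 h1).2⟩
      have e2 := huniq j2 ⟨heq.symm, (mem_filter.1 h2).2⟩
      rw [e1, e2]
    · intro c _
      obtain ⟨j, ⟨hc, hx⟩, _⟩ := hres c x
      exact ⟨j, mem_filter.2 ⟨mem_univ _, hx⟩, hc⟩
  -- b is positive, hence r is positive
  have hbpos : 0 < b := by
    by_contra h
    push_neg at h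
    interval_cases b
    have hne : (⟨0, by omega⟩ : Fin (q * k)) ≠ ⟨1, by omega⟩ := by
      simp [Fin.ext_iff]
    have := hpair _ _ hne
    simp at this
    omega
  have hrpos : 0 < r := (res ⟨0, hbpos⟩).pos
  -- double count incidences: b * k = (q*k) * r
  have hswap : ∑ j : Fin b, (B j).card = ∑ x : Fin (q * k), (Finset.univ.filter fun j => x ∈ B j).card := by
    simp_rw [Finset.card_filter]
    rw [Finset.sum_comm]
    congr 1
    ext j
    simp [Finset.sum_ite_mem]
  have hbk : b * k = q * k * r := by
    have e1 : ∑ j : Fin b, (B j).card = b * k := by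
      simp [hsize, Finset.sum_const, Finset.card_univ]
    have e2 : ∑ x : Fin (q * k), (Finset.univ.filter fun j => x ∈ B j).card = q * k * r := by
      simp [hrep, Finset.sum_const, Finset.card_univ, mul_comm]
    rw [e1, e2] at hswap
    exact hswap
  have hbqr : b = q * r := by
    have : b * k = (q * r) * k := by rw [hbk]; ring
    exact Nat.eq_of_mul_eq_mul_right hk this
  -- pair count through a fixed point: (q*k - 1) * lam = r * (k - 1)
  have hkey : (q * k - 1) * lam = r * (k - 1) := by
    set x : Fin (q * k) := ⟨0, by omega⟩ with hxdef
    calc (q * k - 1) * lam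
        = ∑ _y ∈ Finset.univ.erase x, lam := by
          rw [Finset.sum_const, smul_eq_mul, Finset.card_erase_of_mem (mem_univ _)]
          simp
      _ = ∑ y ∈ Finset.univ.erase x, (Finset.univ.filter fun j => x ∈ B j ∧ y ∈ B j).card := by
          apply Finset.sum_congr rfl
          intro y hy
          exact (hpair x y (Finset.ne_of_mem_erase hy).symm).symm
      _ = ∑ y ∈ Finset.univ.erase x, ∑ j : Fin b, if x ∈ B j ∧ y ∈ B j then 1 else 0 := by
          simp_rw [Finset.card_filter]
      _ = ∑ j : Fin b, ∑ y ∈ Finset.univ.erase x, (if x ∈ B j ∧ y ∈ B j then 1 else 0) := by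
          rw [Finset.sum_comm]
      _ = ∑ j : Fin b, if x ∈ B j then k - 1 else 0 := by
          apply Finset.sum_congr rfl
          intro j _
          by_cases hx : x ∈ B j
          · simp only [hx, true_and, if_true]
            have : ∑ y ∈ Finset.univ.erase x, (if y ∈ B j then 1 else 0)
                = ((Finset.univ.erase x).filter (· ∈ B j)).card := (Finset.card_filter _ _).symm
            rw [this, Finset.filter_erase, Finset.filter_univ_mem,
              Finset.card_erase_of_mem hx, hsize]
          · simp [hx]
      _ = r * (k - 1) := by
          rw [Finset.sum_ite, Finset.sum_const, Finset.sum_const_zero, add_zero,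
            smul_eq_mul, hrep x]
  -- now pure arithmetic
  refine ⟨by rw [pow_two, mul_assoc, hkq], hkq.symm, ?_⟩
  rw [hkq]
  zify [hq.le, hk]
  -- from hb and hbqr : q*r + 1 = q*k + r
  have h2 : q * r + 1 = q * k + r := by omega
  have h1' : ((q:ℤ) * k - 1) * lam = (r:ℤ) * ((k:ℤ) - 1) := by
    have := hkey
    zify [show 1 ≤ q * k by omega, hk] at this
    linarith
  have hcancel : (lam * ((q:ℤ) - 1)) * r = ((k:ℤ) - 1) * r := by
    have h2' : (q:ℤ) * r + 1 = q * k + r := by exact_mod_cast h2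
    linear_combination lam * h2' + h1'
  have hr0 : (r:ℤ) ≠ 0 := by exact_mod_cast hrpos.ne'
  exact mul_right_cancel₀ hr0 hcancel
end

section
/- Every 2-(q^{n−1}, q^{n−2}, (q^{n−2}−1)/(q−1)) design is simple, i.e., in a 2-(v,k,λ) design with parameters (q^{n−1}, q^{n−2}, (q^{n−2}−1)/(q−1)), any block has multiplicity 1. -/
open Finset

private lemma mann_cast_sq (c : ℕ) : ((c * c - c : ℕ) : ℚ) = (c : ℚ) * (c : ℚ) - (c : ℚ) := by
  rcases Nat.eq_zero_or_pos c with h | h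
  · simp [h]
  · rw [Nat.cast_sub (Nat.le_mul_of_pos_left c h)]
    push_cast; ring

private lemma mann_int_nonneg (z : ℤ) : (0 : ℚ) ≤ (z : ℚ) * ((z : ℚ) - 1) := by
  rcases le_or_gt 1 z with h | h
  · have h1 : (1 : ℚ) ≤ (z : ℚ) := by exact_mod_cast h
    nlinarith
  · have h1 : (z : ℚ) ≤ 0 := by exact_mod_cast (by omega : z ≤ 0)
    nlinarith

private lemma mann_pair_count {b v lam : ℕ} (B : Fin b → Finset (Fin v))
    (hpair : ∀ x y : Fin v, x ≠ y →
      (Finset.univ.filter fun j => x ∈ B j ∧ y ∈ B j).card = lam)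
    (T : Finset (Fin v)) :
    ∑ j, ((T ∩ B j).offDiag).card = T.offDiag.card * lam := by
  have h1 : ∀ j, (T ∩ B j).offDiag = T.offDiag.filter (fun p => p.1 ∈ B j ∧ p.2 ∈ B j) := by
    intro j
    ext ⟨x, y⟩
    simp only [Finset.mem_offDiag, Finset.mem_filter, Finset.mem_inter]
    tauto
  simp only [h1, Finset.card_filter]
  rw [Finset.sum_comm]
  rw [Finset.sum_congr rfl (fun p hp => ?_)]
  · rw [Finset.sum_const, smul_eq_mul, mul_comm]
  · rw [← Finset.card_filter, hpair p.1 p.2 (Finset.mem_offDiag.mp hp).2.2]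

private lemma mann_point_count {b v k lam : ℕ} (B : Fin b → Finset (Fin v))
    (hsize : ∀ j, (B j).card = k)
    (hpair : ∀ x y : Fin v, x ≠ y →
      (Finset.univ.filter fun j => x ∈ B j ∧ y ∈ B j).card = lam)
    (x : Fin v) :
    (Finset.univ.filter fun j => x ∈ B j).card * (k - 1) = (v - 1) * lam := by
  have key : ∑ y ∈ Finset.univ.erase x, (Finset.univ.filter fun j => x ∈ B j ∧ y ∈ B j).card
      = (v - 1) * lam := by
    rw [Finset.sum_congr rfl (fun y hy => hpair x y (Ne.symm (Finset.mem_erase.mp hy).1)),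
      Finset.sum_const, smul_eq_mul, Finset.card_erase_of_mem (Finset.mem_univ x),
      Finset.card_univ, Fintype.card_fin]
  rw [← key]
  simp only [Finset.card_filter]
  rw [Finset.sum_comm, Finset.sum_mul]
  apply Finset.sum_congr rfl
  intro j _
  rw [← Finset.card_filter]
  by_cases hx : x ∈ B j
  · have h2 : ((Finset.univ.erase x).filter fun y => x ∈ B j ∧ y ∈ B j) = (B j).erase x := by
      ext y
      simp only [Finset.mem_filter, Finset.mem_erase, Finset.mem_univ, true_and, and_true]
      tauto
    rw [h2, Finset.card_erase_of_mem hx, hsize, if_pos hx, one_mul]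
  · rw [if_neg hx, zero_mul, eq_comm, Finset.card_eq_zero, Finset.filter_eq_empty_iff]
    intro y _
    tauto

private lemma mann_sum_inter {b v : ℕ} (B : Fin b → Finset (Fin v)) (S : Finset (Fin v)) :
    ∑ j, (S ∩ B j).card = ∑ x ∈ S, (Finset.univ.filter fun j => x ∈ B j).card := by
  have h1 : ∀ j, S ∩ B j = S.filter (· ∈ B j) := by
    intro j; ext y; simp [Finset.mem_inter, Finset.mem_filter]
  simp only [h1, Finset.card_filter]
  rw [Finset.sum_comm]

private lemma mann_final (Q U K V L PQ Abar bQ : ℚ)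
    (hQ2 : 2 ≤ Q) (hU1 : 1 ≤ U)
    (eK : K = Q * U) (eV : V = Q * K)
    (e1 : PQ = (K * K - K) * L)
    (e2 : Abar * (K - 1) = K * ((V - 1) * L))
    (e3 : bQ * (K * K - K) = (V * V - V) * L)
    (e4 : L * (Q - 1) = K - 1)
    (hineq : 2 * ((K - (U - 1)) * ((K - (U - 1)) - 1))
      ≤ PQ - 2 * (U - 1) * Abar + bQ * ((U - 1) * U)) : False := by
  subst eK
  subst eV
  have hQ1pos : (0 : ℚ) < Q - 1 := by linarith
  have hU0 : (0 : ℚ) < U := by linarith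
  have hKU1pos : (0 : ℚ) < Q * U - 1 := by nlinarith
  have hPQM : PQ * (Q - 1) = Q * U * (Q * U - 1) * (Q * U - 1) := by
    linear_combination (Q - 1) * e1 + (Q * U * (Q * U) - Q * U) * e4
  have hA2 : Abar * (Q - 1) = Q * U * (Q * (Q * U) - 1) := by
    have h : Abar * (Q - 1) * (Q * U - 1) = Q * U * (Q * (Q * U) - 1) * (Q * U - 1) := by
      linear_combination (Q - 1) * e2 + (Q * U * (Q * (Q * U) - 1)) * e4
    exact mul_right_cancel₀ (ne_of_gt hKU1pos) h
  have hb2 : bQ * (Q - 1) = Q * (Q * (Q * U) - 1) := by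
    have hQU0 : (0 : ℚ) < Q * U := by nlinarith
    have h : bQ * (Q - 1) * (Q * U * (Q * U - 1))
        = Q * (Q * (Q * U) - 1) * (Q * U * (Q * U - 1)) := by
      linear_combination (Q - 1) * e3 + (Q * (Q * U) * (Q * (Q * U)) - Q * (Q * U)) * e4
    exact mul_right_cancel₀ (ne_of_gt (mul_pos hQU0 hKU1pos)) h
  have h6 := mul_le_mul_of_nonneg_right hineq (le_of_lt hQ1pos)
  have hRHSeq : (PQ - 2 * (U - 1) * Abar + bQ * ((U - 1) * U)) * (Q - 1)
      = Q * U ^ 2 * (Q - 1) ^ 2 := by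
    linear_combination hPQM - 2 * (U - 1) * hA2 + (U - 1) * U * hb2
  rw [hRHSeq] at h6
  have hid : 2 * ((Q * U - (U - 1)) * ((Q * U - (U - 1)) - 1)) * (Q - 1)
      = Q * U ^ 2 * (Q - 1) ^ 2 + U * (Q - 1) ^ 2 * (U * (Q - 2) + 2) := by
    ring
  rw [hid] at h6
  have h8 : (0 : ℚ) < U * (Q - 2) + 2 := by nlinarith
  have h9 : (0 : ℚ) < U * (Q - 1) ^ 2 * (U * (Q - 2) + 2) :=
    mul_pos (mul_pos hU0 (pow_pos hQ1pos 2)) h8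
  linarith

/-- special case of Mann's inequality: every
2-(q^{n-1}, q^{n-2}, (q^{n-2}-1)/(q-1)) design (possibly with repeated blocks) is
simple, i.e., no block is repeated. -/
theorem design_is_simple (q n lam b : ℕ) (hq : 2 ≤ q) (hn : 3 ≤ n)
    (hlam : lam * (q - 1) = q ^ (n - 2) - 1)
    (B : Fin b → Finset (Fin (q ^ (n - 1))))
    (hsize : ∀ j, (B j).card = q ^ (n - 2))
    (hpair : ∀ x y : Fin (q ^ (n - 1)), x ≠ y →
      (Finset.univ.filter fun j => x ∈ B j ∧ y ∈ B j).card = lam) :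
    Function.Injective B := by
  intro j0 j1 heq
  by_contra hne
  have hu1 : 1 ≤ q ^ (n - 3) := Nat.one_le_pow _ _ (by omega)
  have hk1 : 1 ≤ q ^ (n - 2) := Nat.one_le_pow _ _ (by omega)
  have hv1 : 1 ≤ q ^ (n - 1) := Nat.one_le_pow _ _ (by omega)
  have hScard : (B j0).card = q ^ (n - 2) := hsize j0
  -- ℕ-level counting facts
  have e1n : ∑ j, ((B j0 ∩ B j).offDiag).card
      = (q ^ (n - 2) * q ^ (n - 2) - q ^ (n - 2)) * lam := by
    rw [mann_pair_count B hpair (B j0), Finset.offDiag_card, hScard]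
  have e3n : b * (q ^ (n - 2) * q ^ (n - 2) - q ^ (n - 2))
      = (q ^ (n - 1) * q ^ (n - 1) - q ^ (n - 1)) * lam := by
    have h := mann_pair_count B hpair Finset.univ
    simp only [Finset.univ_inter, Finset.offDiag_card, hsize, Finset.card_univ,
      Fintype.card_fin, Finset.sum_const, smul_eq_mul] at h
    exact h
  have e2n : (∑ j, (B j0 ∩ B j).card) * (q ^ (n - 2) - 1)
      = q ^ (n - 2) * ((q ^ (n - 1) - 1) * lam) := by
    rw [mann_sum_inter B (B j0), Finset.sum_mul,
      Finset.sum_congr rfl (fun x _ => mann_point_count B hsize hpair x),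
      Finset.sum_const, smul_eq_mul, hScard]
  -- ℚ versions
  have e1 : (∑ j, (((B j0 ∩ B j).offDiag).card : ℚ))
      = ((q : ℚ) ^ (n - 2) * (q : ℚ) ^ (n - 2) - (q : ℚ) ^ (n - 2)) * (lam : ℚ) := by
    have := congrArg (fun m : ℕ => (m : ℚ)) e1n
    push_cast [mann_cast_sq] at this
    exact this
  have e3 : (b : ℚ) * ((q : ℚ) ^ (n - 2) * (q : ℚ) ^ (n - 2) - (q : ℚ) ^ (n - 2))
      = ((q : ℚ) ^ (n - 1) * (q : ℚ) ^ (n - 1) - (q : ℚ) ^ (n - 1)) * (lam : ℚ) := by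
    have := congrArg (fun m : ℕ => (m : ℚ)) e3n
    push_cast [mann_cast_sq] at this
    exact this
  have e2 : (∑ j, (((B j0 ∩ B j).card) : ℚ)) * ((q : ℚ) ^ (n - 2) - 1)
      = (q : ℚ) ^ (n - 2) * (((q : ℚ) ^ (n - 1) - 1) * (lam : ℚ)) := by
    have := congrArg (fun m : ℕ => (m : ℚ)) e2n
    push_cast [Nat.cast_sub hk1, Nat.cast_sub hv1] at this
    exact this
  have e4 : (lam : ℚ) * ((q : ℚ) - 1) = (q : ℚ) ^ (n - 2) - 1 := by
    have := congrArg (fun m : ℕ => (m : ℚ)) hlam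
    push_cast [Nat.cast_sub hk1, Nat.cast_sub (by omega : 1 ≤ q)] at this
    exact this
  have eK : (q : ℚ) ^ (n - 2) = (q : ℚ) * (q : ℚ) ^ (n - 3) := by
    rw [show n - 2 = (n - 3) + 1 by omega, pow_succ]
    ring
  have eV : (q : ℚ) ^ (n - 1) = (q : ℚ) * (q : ℚ) ^ (n - 2) := by
    rw [show n - 1 = (n - 2) + 1 by omega, pow_succ]
    ring
  -- the quadratic inequality from integrality of intersection sizes
  have hterm : ∀ j, (0 : ℚ) ≤ (((B j0 ∩ B j).card : ℚ) - ((q : ℚ) ^ (n - 3) - 1))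
      * ((((B j0 ∩ B j).card : ℚ) - ((q : ℚ) ^ (n - 3) - 1)) - 1) := by
    intro j
    have hz : (((B j0 ∩ B j).card : ℚ) - ((q : ℚ) ^ (n - 3) - 1))
        = ((((B j0 ∩ B j).card : ℤ) - (q ^ (n - 3) : ℤ) + 1 : ℤ) : ℚ) := by
      push_cast; ring
    rw [hz]
    exact mann_int_nonneg _
  have hineq : 2 * (((q : ℚ) ^ (n - 2) - ((q : ℚ) ^ (n - 3) - 1))
        * (((q : ℚ) ^ (n - 2) - ((q : ℚ) ^ (n - 3) - 1)) - 1))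
      ≤ (∑ j, (((B j0 ∩ B j).offDiag).card : ℚ))
        - 2 * ((q : ℚ) ^ (n - 3) - 1) * (∑ j, (((B j0 ∩ B j).card) : ℚ))
        + (b : ℚ) * (((q : ℚ) ^ (n - 3) - 1) * (q : ℚ) ^ (n - 3)) := by
    have hsumle : ∑ j ∈ ({j0, j1} : Finset (Fin b)),
        ((((B j0 ∩ B j).card : ℚ) - ((q : ℚ) ^ (n - 3) - 1))
          * ((((B j0 ∩ B j).card : ℚ) - ((q : ℚ) ^ (n - 3) - 1)) - 1))
        ≤ ∑ j, ((((B j0 ∩ B j).card : ℚ) - ((q : ℚ) ^ (n - 3) - 1))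
          * ((((B j0 ∩ B j).card : ℚ) - ((q : ℚ) ^ (n - 3) - 1)) - 1)) :=
      Finset.sum_le_sum_of_subset_of_nonneg (Finset.subset_univ _) (fun j _ _ => hterm j)
    have hj0 : B j0 ∩ B j0 = B j0 := Finset.inter_self _
    have hj1 : B j0 ∩ B j1 = B j0 := by rw [← heq]; exact Finset.inter_self _
    rw [Finset.sum_pair hne, hj0, hj1, hScard] at hsumle
    have hexpand : ∑ j, ((((B j0 ∩ B j).card : ℚ) - ((q : ℚ) ^ (n - 3) - 1))
          * ((((B j0 ∩ B j).card : ℚ) - ((q : ℚ) ^ (n - 3) - 1)) - 1))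
        = (∑ j, (((B j0 ∩ B j).offDiag).card : ℚ))
          - 2 * ((q : ℚ) ^ (n - 3) - 1) * (∑ j, (((B j0 ∩ B j).card) : ℚ))
          + (b : ℚ) * (((q : ℚ) ^ (n - 3) - 1) * (q : ℚ) ^ (n - 3)) := by
      have hptwise : ∀ j ∈ (Finset.univ : Finset (Fin b)),
          ((((B j0 ∩ B j).card : ℚ) - ((q : ℚ) ^ (n - 3) - 1))
            * ((((B j0 ∩ B j).card : ℚ) - ((q : ℚ) ^ (n - 3) - 1)) - 1))
          = ((((B j0 ∩ B j).offDiag).card : ℚ)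
            - 2 * ((q : ℚ) ^ (n - 3) - 1) * ((B j0 ∩ B j).card : ℚ))
            + (((q : ℚ) ^ (n - 3) - 1) * (q : ℚ) ^ (n - 3)) := by
        intro j _
        rw [Finset.offDiag_card, mann_cast_sq]
        ring
      rw [Finset.sum_congr rfl hptwise, Finset.sum_add_distrib, Finset.sum_sub_distrib,
        Finset.sum_const, Finset.card_univ, Fintype.card_fin, nsmul_eq_mul, ← Finset.mul_sum]
    rw [hexpand] at hsumle
    push_cast at hsumle ⊢
    linarith
  have hQ2 : (2 : ℚ) ≤ (q : ℚ) := by exact_mod_cast hq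
  have hU1 : (1 : ℚ) ≤ (q : ℚ) ^ (n - 3) := by exact_mod_cast hu1
  exact mann_final (q : ℚ) ((q : ℚ) ^ (n - 3)) ((q : ℚ) ^ (n - 2)) ((q : ℚ) ^ (n - 1))
    (lam : ℚ) _ _ (b : ℚ) hQ2 hU1 eK eV e1 e2 e3 e4 hineq
end

section
/- Let D be an affine resolvable 2-(qⁿ, q^{n−1}, (q^{n−1}−1)/(q−1)) design with a good block B, q = p^t ≥ 4, p prime, n ≥ 2. If the residual design D_B is linearly embeddable over GF(p), then the GF(p)-code spanned by the rows of the incidence matrix M'' of the substructure D'' of D_B (blocks of size q^{n−1} − q^{n−2}) contains at least (p−1)·C(q^{n−1}, 2) codewords of weight 2q^{n−1} whose supports are unions of parallel classes of the resolution R of D'' defined by B. -/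
/-!
For distinct points `u, w` of the good block `B₀`, consider `a • (χ_u - χ_w)`, where `χ_x` is the
incidence vector of `x` with the blocks not parallel to `B₀`.

* It is a codeword: rows of points outside `B₀` vanish at `B₀` while rows of points of `B₀` do
  not, so by linear embeddability the row space of `D` is the residual row space plus one line,
  which forces `χ_u - χ_w` (zero at `B₀`) into the residual row space.
* Its support is the set of blocks meeting `{u, w}` in one point. Such a block is never parallel
  to `B₀`, and double counting gives `r = λ + q^{n-1}`, so the weight is `2 (r - λ) = 2q^{n-1}`.
  Whether `u` or `w` lies in a block only depends on the trace of the block on `B₀`.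
* As `3λ < q^{n-1}`, every point of `B₀` lies in a non-parallel block missing any three other
  points of `B₀`; evaluating at such blocks recovers `a` and `u < w` from the codeword.
-/

open Finset Module

namespace BlockDesign

variable {α ι κ : Type*} {B : ι → Finset α} {res : ι → κ}

theorem eq_of_res_eq_of_mem (hres : ∀ c x, ∃! j, res j = c ∧ x ∈ B j) {x : α} {j j' : ι}
    (h : res j = res j') (hx : x ∈ B j) (hx' : x ∈ B j') : j = j' :=
  (hres (res j') x).unique ⟨h, hx⟩ ⟨rfl, hx'⟩

theorem res_ne_of_mem_of_notMem (hres : ∀ c x, ∃! j, res j = c ∧ x ∈ B j) {u w : α}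
    {j₀ j : ι} (hu₀ : u ∈ B j₀) (hw₀ : w ∈ B j₀) (hu : u ∈ B j) (hw : w ∉ B j) :
    res j ≠ res j₀ := fun h =>
  hw (eq_of_res_eq_of_mem hres h hu hu₀ ▸ hw₀)

theorem mem_iff_of_inter_eq {S : Finset α} [DecidableEq α] {j j' : ι}
    (h : B j ∩ S = B j' ∩ S) {x : α} (hx : x ∈ S) : x ∈ B j ↔ x ∈ B j' := by
  simpa [hx] using Finset.ext_iff.1 h x

variable [Fintype ι] [DecidableEq α] {lam : ℕ}

theorem card_blocks_through [Fintype κ] (hres : ∀ c x, ∃! j, res j = c ∧ x ∈ B j) (x : α) :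
    #{j | x ∈ B j} = Fintype.card κ := by
  rw [← card_univ]
  refine card_bij (fun j _ => res j) (fun _ _ => mem_univ _) ?_ ?_
  · intro j hj j' hj' h
    exact eq_of_res_eq_of_mem hres h (mem_filter.1 hj).2 (mem_filter.1 hj').2
  · intro c _
    obtain ⟨j, ⟨hjc, hxj⟩, -⟩ := hres c x
    exact ⟨j, mem_filter.2 ⟨mem_univ _, hxj⟩, hjc⟩

theorem card_blocks_through_mul_pred [Fintype α] (x : α) {k : ℕ} (hsize : ∀ j, #(B j) = k)
    (hpair : ∀ x y, x ≠ y → #{j | x ∈ B j ∧ y ∈ B j} = lam) :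
    #{j | x ∈ B j} * (k - 1) = (Fintype.card α - 1) * lam := by
  have h := sum_card_bipartiteAbove_eq_sum_card_bipartiteBelow (s := {j | x ∈ B j})
    (t := univ.erase x) (r := fun j y => y ∈ B j)
  have hAbove : ∀ j ∈ ({j | x ∈ B j} : Finset ι),
      #((univ.erase x).bipartiteAbove (fun j y => y ∈ B j) j) = k - 1 := by
    intro j hj
    rw [← hsize j, ← card_erase_of_mem (mem_filter.1 hj).2]
    congr 1
    ext y
    simp [bipartiteAbove, and_comm]
  have hBelow : ∀ y ∈ univ.erase x,
      #(({j | x ∈ B j} : Finset ι).bipartiteBelow (fun j y => y ∈ B j) y) = lam := by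
    intro y hy
    rw [← hpair x y (ne_of_mem_erase hy).symm, bipartiteBelow, filter_filter]
  rw [sum_congr rfl hAbove, sum_congr rfl hBelow, sum_const, sum_const,
    card_erase_of_mem (mem_univ x), card_univ] at h
  simpa using h

theorem card_blocks_through_notMem {u w : α} (huw : u ≠ w)
    (hpair : ∀ x y, x ≠ y → #{j | x ∈ B j ∧ y ∈ B j} = lam) :
    #{j | u ∈ B j ∧ w ∉ B j} = #{j | u ∈ B j} - lam := by
  rw [← hpair u w huw, ← filter_filter, ← filter_filter, eq_tsub_iff_add_eq_of_le
    (card_le_card (filter_subset _ _)), add_comm]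
  exact card_filter_add_card_filter_not _

theorem card_blocks_xor [DecidableEq ι] {u w : α} (huw : u ≠ w)
    (hpair : ∀ x y, x ≠ y → #{j | x ∈ B j ∧ y ∈ B j} = lam) :
    #{j | Xor (u ∈ B j) (w ∈ B j)} = (#{j | u ∈ B j} - lam) + (#{j | w ∈ B j} - lam) := by
  rw [← card_blocks_through_notMem huw hpair, ← card_blocks_through_notMem huw.symm hpair,
    ← card_union_of_disjoint (disjoint_filter.2 fun _ _ h h' => h'.2 h.1), ← filter_or]
  rfl

theorem exists_block_through_avoiding [DecidableEq ι] {u : α} (T : Finset α) (hu : u ∉ T)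
    (hpair : ∀ x y, x ≠ y → #{j | x ∈ B j ∧ y ∈ B j} = lam)
    (hT : #T * lam < #{j | u ∈ B j}) :
    ∃ j, u ∈ B j ∧ ∀ t ∈ T, t ∉ B j := by
  have hcover : ({j | u ∈ B j ∧ ∃ t ∈ T, t ∈ B j} : Finset ι) ⊆
      T.biUnion fun t => {j | u ∈ B j ∧ t ∈ B j} := by
    intro j hj
    obtain ⟨hu, t, ht, htj⟩ := (mem_filter.1 hj).2
    exact mem_biUnion.2 ⟨t, ht, mem_filter.2 ⟨mem_univ _, hu, htj⟩⟩
  have hbad : #{j | u ∈ B j ∧ ∃ t ∈ T, t ∈ B j} < #{j | u ∈ B j} := by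
    refine lt_of_le_of_lt ((card_le_card hcover).trans card_biUnion_le) ?_
    rwa [sum_congr rfl fun t ht => hpair u t (ne_of_mem_of_not_mem ht hu).symm, sum_const,
      smul_eq_mul]
  obtain ⟨j, hj, hj'⟩ := exists_mem_notMem_of_card_lt_card hbad
  simp only [mem_filter, mem_univ, true_and, not_and, not_exists] at hj hj'
  exact ⟨j, hj, hj' hj⟩

theorem card_nonparallel_blocks_xor [DecidableEq ι] [DecidableEq κ] (hres : ∀ c x, ∃! j, res j = c ∧ x ∈ B j)
    (hpair : ∀ x y, x ≠ y → #{j | x ∈ B j ∧ y ∈ B j} = lam) {j₀ : ι} {u w : α}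
    (hu : u ∈ B j₀) (hw : w ∈ B j₀) (huw : u ≠ w) :
    #{j : {j // res j ≠ res j₀} | Xor (u ∈ B j) (w ∈ B j)} =
      (#{j | u ∈ B j} - lam) + (#{j | w ∈ B j} - lam) := by
  rw [← card_blocks_xor huw hpair, ← Fintype.card_subtype, ← Fintype.card_subtype]
  refine Fintype.card_congr (Equiv.subtypeSubtypeEquivSubtype (p := fun j => res j ≠ res j₀)
    (q := fun j => Xor (u ∈ B j) (w ∈ B j)) fun {j} h => ?_)
  rcases h with ⟨huj, hwj⟩ | ⟨hwj, huj⟩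
  · exact res_ne_of_mem_of_notMem hres hu hw huj hwj
  · exact res_ne_of_mem_of_notMem hres hw hu hwj huj

theorem exists_nonparallel_block_through_avoiding [DecidableEq ι]
    (hres : ∀ c x, ∃! j, res j = c ∧ x ∈ B j)
    (hpair : ∀ x y, x ≠ y → #{j | x ∈ B j ∧ y ∈ B j} = lam) {j₀ : ι} {z x y y' : α}
    (hz : z ∈ B j₀) (hx : x ∈ B j₀) (hzx : z ≠ x) (hzy : z ≠ y) (hzy' : z ≠ y')
    (hlam : 3 * lam < #{j | z ∈ B j}) :
    ∃ j : {j // res j ≠ res j₀}, z ∈ B j ∧ x ∉ B j ∧ y ∉ B j ∧ y' ∉ B j := by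
  obtain ⟨j, hzj, hj⟩ := exists_block_through_avoiding {x, y, y'} (by simp [hzx, hzy, hzy'])
    hpair ((Nat.mul_le_mul_right lam card_le_three).trans_lt hlam)
  have hxj : x ∉ B j := hj x (by simp)
  exact ⟨⟨j, res_ne_of_mem_of_notMem hres hz hx hzj hxj⟩, hzj, hxj, hj y (by simp),
    hj y' (by simp)⟩

theorem replication_number_eq {r k q lam : ℕ} (hk : 2 ≤ k) (hlam : lam * (q - 1) = k - 1)
    (hcount : r * (k - 1) = (k * q - 1) * lam) : r = lam + k := by
  have hq : 1 ≤ q := Nat.pos_of_ne_zero fun h => by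
    rw [h, zero_tsub, mul_zero] at hlam
    omega
  zify [hq, (by omega : 1 ≤ k), Nat.one_le_iff_ne_zero.2 (by positivity : k * q ≠ 0)]
    at hlam hcount
  have hk1 : (0 : ℤ) < k - 1 := by omega
  refine Int.ofNat_inj.1 (mul_right_cancel₀ hk1.ne' ?_)
  push_cast
  linear_combination hcount + (k : ℤ) * hlam

end BlockDesign

open BlockDesign

theorem Submodule.sub_mem_of_finrank_le_succ {K V : Type*} [DivisionRing K] [AddCommGroup V]
    [Module K V] {W T : Submodule K V} [FiniteDimensional K T] (hWT : W ≤ T)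
    (hrank : finrank K T ≤ finrank K W + 1) (f : V →ₗ[K] K) (hf : W ≤ LinearMap.ker f)
    {x y : V} (hx : x ∈ T) (hy : y ∈ T) (hfx : f x ≠ 0) (hxy : f x = f y) : x - y ∈ W := by
  have hxW : x ∉ W := fun h => hfx (hf h)
  have hlt : W < W ⊔ K ∙ x :=
    lt_of_le_of_ne le_sup_left fun h => hxW (h ▸ mem_sup_right (mem_span_singleton_self x))
  have hle : W ⊔ K ∙ x ≤ T := sup_le hWT ((span_singleton_le_iff_mem x T).2 hx)
  have := finiteDimensional_of_le hle
  have hT : W ⊔ K ∙ x = T :=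
    eq_of_le_of_finrank_le hle (hrank.trans (finrank_lt_finrank_of_lt hlt))
  obtain ⟨w, hw, z, hz, hwz⟩ := mem_sup.1 (hT ▸ T.sub_mem hx hy)
  obtain ⟨c, rfl⟩ := mem_span_singleton.1 hz
  have hc : c = 0 := by
    have := congrArg f hwz
    rw [map_add, LinearMap.mem_ker.1 (hf hw), map_smul, map_sub, hxy, sub_self, zero_add,
      smul_eq_mul] at this
    exact (mul_eq_zero.1 this).resolve_right (hxy ▸ hfx)
  rwa [← hwz, hc, zero_smul, add_zero]

def incidenceRow (K : Type*) [Zero K] [One K] {α ι : Type*} [DecidableEq α]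
    (B : ι → Finset α) (x : α) : ι → K :=
  fun j => if x ∈ B j then 1 else 0

section IncidenceRow

variable {K α ι : Type*} [Field K] [DecidableEq α] {B : ι → Finset α}

theorem incidenceRow_sub_mem_span [Fintype α] [Fintype ι] [DecidableEq ι] {j₀ : ι}
    (hemb : (Matrix.of fun i j => if i ∈ B j then (1 : K) else 0).rank ≤
      (Matrix.of fun (i : {x // x ∉ B j₀}) (j : {j // j ≠ j₀}) =>
        if (i : α) ∈ B j then (1 : K) else 0).rank + 1)
    {u w : α} (hu : u ∈ B j₀) (hw : w ∈ B j₀) :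
    incidenceRow K B u - incidenceRow K B w ∈
      Submodule.span K (Set.range fun x : {x // x ∉ B j₀} => incidenceRow K B x) := by
  set W := Submodule.span K (Set.range fun x : {x // x ∉ B j₀} => incidenceRow K B x)
  set T := Submodule.span K (Set.range (incidenceRow K B))
  have hWT : W ≤ T := Submodule.span_mono (Set.range_subset_iff.2 fun x => ⟨x, rfl⟩)
  have hrank : finrank K T ≤ finrank K W + 1 := by
    have hres := Submodule.finrank_map_le
      (LinearMap.funLeft K K (Subtype.val : {j // j ≠ j₀} → ι)) W
    rw [Submodule.map_span, ← Set.range_comp] at hres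
    rw [Matrix.rank_eq_finrank_span_row, Matrix.rank_eq_finrank_span_row] at hemb
    exact hemb.trans (Nat.add_le_add_right hres 1)
  have hf : W ≤ LinearMap.ker (LinearMap.proj (R := K) (φ := fun _ : ι => K) j₀) :=
    Submodule.span_le.2 (Set.range_subset_iff.2 fun x => by simp [incidenceRow, x.2])
  refine Submodule.sub_mem_of_finrank_le_succ hWT hrank _ hf (Submodule.subset_span ⟨u, rfl⟩)
    (Submodule.subset_span ⟨w, rfl⟩) ?_ ?_ <;> simp [incidenceRow, hu, hw]

theorem incidenceRow_comp_sub_mem_span [Fintype α] [Fintype ι] [DecidableEq ι] {j₀ : ι}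
    (hemb : (Matrix.of fun i j => if i ∈ B j then (1 : K) else 0).rank ≤
      (Matrix.of fun (i : {x // x ∉ B j₀}) (j : {j // j ≠ j₀}) =>
        if (i : α) ∈ B j then (1 : K) else 0).rank + 1)
    {u w : α} (hu : u ∈ B j₀) (hw : w ∈ B j₀) {κ : Type*} (g : κ → ι) :
    incidenceRow K (B ∘ g) u - incidenceRow K (B ∘ g) w ∈
      Submodule.span K (Set.range fun x : {x // x ∉ B j₀} => incidenceRow K (B ∘ g) x) := by
  have h := Submodule.mem_map_of_mem (f := LinearMap.funLeft K K g)
    (incidenceRow_sub_mem_span hemb hu hw)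
  rwa [Submodule.map_span, ← Set.range_comp] at h

theorem smul_sub_incidenceRow_apply_ne_zero_iff {a : K} (ha : a ≠ 0) (u w : α) (j : ι) :
    (a • (incidenceRow K B u - incidenceRow K B w)) j ≠ 0 ↔ Xor (u ∈ B j) (w ∈ B j) := by
  by_cases hu : u ∈ B j <;> by_cases hw : w ∈ B j <;> simp [incidenceRow, hu, hw, ha]

theorem smul_sub_incidenceRow_apply_of_mem_of_notMem (a : K) {u w : α} {j : ι}
    (hu : u ∈ B j) (hw : w ∉ B j) : (a • (incidenceRow K B u - incidenceRow K B w)) j = a := by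
  simp [incidenceRow, hu, hw]

theorem smul_sub_incidenceRow_ne {a : K} (ha : a ≠ 0) (b : K) {u w u' w' : α} {j : ι}
    (hu : u ∈ B j) (hw : w ∉ B j) (hu' : u' ∉ B j) (hw' : w' ∉ B j) :
    a • (incidenceRow K B u - incidenceRow K B w) ≠
      b • (incidenceRow K B u' - incidenceRow K B w') := fun h => by
  have := congrFun h j
  rw [smul_sub_incidenceRow_apply_of_mem_of_notMem a hu hw] at this
  simp [incidenceRow, hu', hw', ha] at this

theorem injOn_smul_sub_incidenceRow [LinearOrder α] {S : Finset α}
    (hsep : ∀ z ∈ S, ∀ x ∈ S, ∀ y y' : α, z ≠ x → z ≠ y → z ≠ y' →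
      ∃ j, z ∈ B j ∧ x ∉ B j ∧ y ∉ B j ∧ y' ∉ B j) :
    Set.InjOn
      (fun g : Kˣ × α × α => (g.1 : K) • (incidenceRow K B g.2.1 - incidenceRow K B g.2.2))
      (Set.univ ×ˢ ↑{e ∈ S ×ˢ S | e.1 < e.2}) := by
  rintro ⟨a, u, w⟩ ⟨-, hg⟩ ⟨b, u', w'⟩ ⟨-, hg'⟩ h
  simp only [coe_filter, mem_product, Set.mem_ofPred_eq] at hg hg' h
  obtain ⟨⟨hu, hw⟩, huw⟩ := hg
  obtain ⟨⟨hu', hw'⟩, huw'⟩ := hg'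
  have h' : ((-a : Kˣ) : K) • (incidenceRow K B w - incidenceRow K B u) =
      ((-b : Kˣ) : K) • (incidenceRow K B w' - incidenceRow K B u') := by
    simpa only [Units.val_neg, neg_smul, ← smul_neg, neg_sub] using h
  have hu_mem : u = u' ∨ u = w' := by
    by_contra! hne
    obtain ⟨j, hj⟩ := hsep u hu w hw u' w' huw.ne hne.1 hne.2
    exact smul_sub_incidenceRow_ne a.ne_zero b hj.1 hj.2.1 hj.2.2.1 hj.2.2.2 h
  have hw_mem : w = w' ∨ w = u' := by
    by_contra! hne
    obtain ⟨j, hj⟩ := hsep w hw u hu w' u' huw.ne' hne.1 hne.2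
    exact smul_sub_incidenceRow_ne (-a).ne_zero _ hj.1 hj.2.1 hj.2.2.1 hj.2.2.2 h'
  obtain ⟨rfl, rfl⟩ : u = u' ∧ w = w' := by
    rcases hu_mem with h₁ | h₁ <;> rcases hw_mem with h₂ | h₂
    · exact ⟨h₁, h₂⟩
    all_goals order
  obtain ⟨j, huj, hwj, -⟩ := hsep u hu w hw w w huw.ne huw.ne huw.ne
  have := congrFun h j
  rw [smul_sub_incidenceRow_apply_of_mem_of_notMem _ huj hwj,
    smul_sub_incidenceRow_apply_of_mem_of_notMem _ huj hwj] at this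
  rw [Units.ext this]

end IncidenceRow

theorem card_filter_fst_lt_snd {α : Type*} [LinearOrder α] (s : Finset α) :
    #{e ∈ s ×ˢ s | e.1 < e.2} = (#s).choose 2 := by
  rw [← card_powersetCard]
  refine card_bij (fun e _ => {e.1, e.2}) ?_ ?_ ?_
  · intro e he
    simp only [mem_filter, mem_product] at he
    rw [mem_powersetCard, card_pair he.2.ne]
    exact ⟨insert_subset he.1.1 (singleton_subset_iff.2 he.1.2), rfl⟩
  · rintro ⟨x, y⟩ he ⟨x', y'⟩ he' h
    simp only [mem_filter] at he he'
    have := congrArg ((↑) : Finset α → Set α) h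
    push_cast at this
    rcases Set.pair_eq_pair_iff.1 this with ⟨rfl, rfl⟩ | ⟨rfl, rfl⟩
    · rfl
    · exact absurd (he.2.trans he'.2) (lt_irrefl _)
  · intro t ht
    obtain ⟨hts, x, y, hxy, rfl⟩ := (mem_powersetCard.1 ht).imp_right card_eq_two.1
    rcases hxy.lt_or_gt with h | h
    · exact ⟨(x, y), by simp_all [insert_subset_iff], rfl⟩
    · exact ⟨(y, x), by simp_all [insert_subset_iff], pair_comm y x⟩

theorem residual_embeddable_codewords_general (p n q lam b r : ℕ) [Fact p.Prime]
    (hq4 : 4 ≤ q) (hn : 2 ≤ n)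
    (B : Fin b → Finset (Fin (q ^ n)))
    (hsize : ∀ j, (B j).card = q ^ (n - 1))
    (hlam : lam * (q - 1) = q ^ (n - 1) - 1)
    (hpair : ∀ x y : Fin (q ^ n), x ≠ y →
      (Finset.univ.filter fun j => x ∈ B j ∧ y ∈ B j).card = lam)
    (res : Fin b → Fin r)
    (hres : ∀ (c : Fin r) (x : Fin (q ^ n)), ∃! j, res j = c ∧ x ∈ B j)
    (b0 : Fin b)
    -- the residual design D_{B b0} is linearly embeddable over GF(p)
    (hemb : (Matrix.of fun (i : Fin (q ^ n)) (j : Fin b) =>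
        if i ∈ B j then (1 : ZMod p) else 0).rank
      = (Matrix.of fun (i : {x : Fin (q ^ n) // x ∉ B b0}) (j : {j : Fin b // j ≠ b0}) =>
        if (i : Fin (q ^ n)) ∈ B (j : Fin b) then (1 : ZMod p) else 0).rank + 1) :
    (p - 1) * Nat.choose (q ^ (n - 1)) 2 ≤
      Set.ncard { c : {j : Fin b // res j ≠ res b0} → ZMod p |
        c ∈ Submodule.span (ZMod p)
          (Set.range fun (x : {x : Fin (q ^ n) // x ∉ B b0}) =>
            fun j : {j : Fin b // res j ≠ res b0} =>
              if (x : Fin (q ^ n)) ∈ B (j : Fin b) then (1 : ZMod p) else 0) ∧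
        (Finset.univ.filter fun j => c j ≠ 0).card = 2 * q ^ (n - 1) ∧
        ∀ j j' : {j : Fin b // res j ≠ res b0},
          B (j : Fin b) ∩ B b0 = B (j' : Fin b) ∩ B b0 → (c j ≠ 0 ↔ c j' ≠ 0) } := by
  have hk : q ≤ q ^ (n - 1) := Nat.le_self_pow (by omega) q
  have hv : q ^ n = q ^ (n - 1) * q := by rw [← pow_succ, Nat.sub_add_cancel (by omega)]
  have hthrough : ∀ x, #{j | x ∈ B j} = lam + q ^ (n - 1) := fun x => by
    have hcount := card_blocks_through_mul_pred x hsize hpair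
    rw [card_blocks_through hres, Fintype.card_fin, Fintype.card_fin, hv] at hcount
    rw [card_blocks_through hres, Fintype.card_fin]
    exact replication_number_eq (by omega) hlam hcount
  have h3lam : 3 * lam < lam + q ^ (n - 1) := by
    have := Nat.mul_le_mul_left lam (show 3 ≤ q - 1 by omega)
    omega
  refine le_of_eq_of_le ?_ (Set.ncard_le_ncard_of_injOn _ ?_ (injOn_smul_sub_incidenceRow
    (B := B ∘ Subtype.val) (S := B b0) fun z hz x hx y y' hzx hzy hzy' =>
      exists_nonparallel_block_through_avoiding hres hpair hz hx hzx hzy hzy'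
        (hthrough z ▸ h3lam)))
  · rw [← coe_univ, ← coe_product, Set.ncard_coe_finset, card_product, card_univ,
      ZMod.card_units, card_filter_fst_lt_snd, hsize]
  rintro ⟨a, u, w⟩ ⟨-, hg⟩
  simp only [coe_filter, mem_product, Set.mem_ofPred_eq] at hg
  obtain ⟨⟨hu, hw⟩, huw⟩ := hg
  refine ⟨Submodule.smul_mem _ _ (incidenceRow_comp_sub_mem_span hemb.le hu hw _), ?weight,
    ?support⟩
  case weight =>
    simp only [smul_sub_incidenceRow_apply_ne_zero_iff a.ne_zero, Function.comp_apply]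
    rw [card_nonparallel_blocks_xor hres hpair hu hw huw.ne, hthrough, hthrough]
    omega
  case support =>
    intro j j' htr
    simp only [smul_sub_incidenceRow_apply_ne_zero_iff a.ne_zero, Function.comp_apply]
    rw [mem_iff_of_inter_eq htr hu, mem_iff_of_inter_eq htr hw]

/-- Theorem 5 of the paper: Let `D` be an affine resolvable
2-(qⁿ, q^{n-1}, (q^{n-1}-1)/(q-1)) design with a good block `B = B b0`, where
`q = p^t ≥ 4`, `p` prime, `n ≥ 2`. If the residual design `D_B` is linearly embeddable
over `GF(p)`, then the `GF(p)`-code spanned by the rows of the incidence matrix `M''`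
of the substructure `D''` of `D_B` (the blocks of size `q^{n-1} - q^{n-2}`, i.e. the
residuals of blocks not parallel to `B`) contains at least `(p-1)·C(q^{n-1},2)`
codewords of weight `2q^{n-1}` whose supports are unions of parallel classes of the
resolution `R` of `D''` defined by `B` (blocks with equal trace on `B` are parallel). -/
theorem residual_embeddable_codewords (p t n q lam b r : ℕ) [Fact p.Prime]
    (hq : q = p ^ t) (hq4 : 4 ≤ q) (hn : 2 ≤ n)
    (B : Fin b → Finset (Fin (q ^ n)))
    (hsize : ∀ j, (B j).card = q ^ (n - 1))
    (hlam : lam * (q - 1) = q ^ (n - 1) - 1)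
    (hpair : ∀ x y : Fin (q ^ n), x ≠ y →
      (Finset.univ.filter fun j => x ∈ B j ∧ y ∈ B j).card = lam)
    (res : Fin b → Fin r)
    (hres : ∀ (c : Fin r) (x : Fin (q ^ n)), ∃! j, res j = c ∧ x ∈ B j)
    (b0 : Fin b)
    -- b0 is a good block: each nonempty trace on B b0 comes from exactly q blocks
    (hgood : ∀ j : Fin b, res j ≠ res b0 →
      (Finset.univ.filter fun j' =>
        res j' ≠ res b0 ∧ B j' ∩ B b0 = B j ∩ B b0).card = q)
    -- the residual design D_{B b0} is linearly embeddable over GF(p)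
    (hemb : (Matrix.of fun (i : Fin (q ^ n)) (j : Fin b) =>
        if i ∈ B j then (1 : ZMod p) else 0).rank
      = (Matrix.of fun (i : {x : Fin (q ^ n) // x ∉ B b0}) (j : {j : Fin b // j ≠ b0}) =>
        if (i : Fin (q ^ n)) ∈ B (j : Fin b) then (1 : ZMod p) else 0).rank + 1) :
    (p - 1) * Nat.choose (q ^ (n - 1)) 2 ≤
      Set.ncard { c : {j : Fin b // res j ≠ res b0} → ZMod p |
        c ∈ Submodule.span (ZMod p)
          (Set.range fun (x : {x : Fin (q ^ n) // x ∉ B b0}) =>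
            fun j : {j : Fin b // res j ≠ res b0} =>
              if (x : Fin (q ^ n)) ∈ B (j : Fin b) then (1 : ZMod p) else 0) ∧
        (Finset.univ.filter fun j => c j ≠ 0).card = 2 * q ^ (n - 1) ∧
        ∀ j j' : {j : Fin b // res j ≠ res b0},
          B (j : Fin b) ∩ B b0 = B (j' : Fin b) ∩ B b0 → (c j ≠ 0 ↔ c j' ≠ 0) } :=
  residual_embeddable_codewords_general p n q lam b r hq4 hn B hsize hlam hpair res hres b0 hemb
end

section
/- Let B be a family of distinct d-subsets of an N-set. If d = (q^n−1)/(q−1) and N = (q^{n+1}−1)/(q−1), and every two distinct d-subsets in the family meet in at most (q^{n−1}−1)/(q−1) points, then the family has at most N members. -/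
open Finset

set_option maxHeartbeats 1000000 in
/-- restricted Johnson bound, special case: a family of distinct
`d`-subsets of an `N`-set, any two of which meet in at most `λ₀` points, where
`N = (q^{n+1}-1)/(q-1)`, `d = (qⁿ-1)/(q-1)`, `λ₀ = (q^{n-1}-1)/(q-1)`, has at most
`N` members. -/
theorem restricted_johnson_bound (q n N d lam0 : ℕ) (hq : 2 ≤ q) (hn : 1 ≤ n)
    (hN : N * (q - 1) = q ^ (n + 1) - 1)
    (hd : d * (q - 1) = q ^ n - 1)
    (hlam0 : lam0 * (q - 1) = q ^ (n - 1) - 1)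
    (F : Finset (Finset (Fin N)))
    (hsize : ∀ s ∈ F, s.card = d)
    (hmeet : ∀ s ∈ F, ∀ t ∈ F, s ≠ t → (s ∩ t).card ≤ lam0) :
    F.card ≤ N := by
  have hq1 : 1 ≤ q := by omega
  have hpow1 : (1:ℕ) ≤ q ^ (n-1) := Nat.one_le_pow _ _ (by omega)
  have hpown : (1:ℕ) ≤ q ^ n := Nat.one_le_pow _ _ (by omega)
  have hpown1 : (1:ℕ) ≤ q ^ (n+1) := Nat.one_le_pow _ _ (by omega)
  zify [hq1, hpown1] at hN
  zify [hq1, hpown] at hd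
  zify [hq1, hpow1] at hlam0
  have hqn : ((q:ℤ)) ^ n = (q:ℤ) * (q:ℤ) ^ (n-1) := by
    conv_lhs => rw [show n = (n-1) + 1 by omega]
    ring
  have hqne : ((q:ℤ)) - 1 ≠ 0 := by
    have : (2:ℤ) ≤ (q:ℤ) := by exact_mod_cast hq
    linarith
  -- Structural identities
  have hd1 : (d:ℤ) = q * lam0 + 1 := by
    have h : ((d:ℤ) - (q * lam0 + 1)) * ((q:ℤ) - 1) = 0 := by
      nlinarith [hd, hlam0, hqn]
    rcases mul_eq_zero.mp h with h' | h'
    · linarith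
    · exact absurd h' hqne
  have hN1 : (N:ℤ) = q * d + 1 := by
    have h : ((N:ℤ) - (q * d + 1)) * ((q:ℤ) - 1) = 0 := by
      have hqn1 : ((q:ℤ)) ^ (n+1) = (q:ℤ) * (q:ℤ) ^ n := by ring
      nlinarith [hN, hd, hqn1]
    rcases mul_eq_zero.mp h with h' | h'
    · linarith
    · exact absurd h' hqne
  -- Counting
  set m := F.card with hm
  rcases Nat.eq_zero_or_pos m with h0 | hpos
  · omega
  set r : Fin N → ℕ := fun x => (F.filter (fun s => x ∈ s)).card with hr
  -- Fact 1: sum of replication numbers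
  have h1 : ∑ x : Fin N, r x = m * d := by
    simp only [hr, Finset.card_filter]
    rw [Finset.sum_comm]
    have key : ∀ s ∈ F, (∑ x : Fin N, if x ∈ s then 1 else 0) = d := by
      intro s hs
      simp [Finset.sum_ite_mem, hsize s hs]
    rw [Finset.sum_congr rfl key, Finset.sum_const, smul_eq_mul, hm]
  -- Fact 2: sum of squares of replication numbers
  have h2 : ∑ x : Fin N, (r x)^2 = ∑ s ∈ F, ∑ t ∈ F, (s ∩ t).card := by
    have key : ∀ x : Fin N,
        (r x)^2 = ∑ s ∈ F, ∑ t ∈ F, (if x ∈ s ∩ t then 1 else 0) := by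
      intro x
      simp only [hr, Finset.card_filter, sq]
      rw [Finset.sum_mul_sum]
      refine Finset.sum_congr rfl fun s hs => Finset.sum_congr rfl fun t ht => ?_
      by_cases h1 : x ∈ s <;> by_cases h2 : x ∈ t <;> simp [h1, h2]
    rw [Finset.sum_congr rfl (fun x _ => key x)]
    rw [Finset.sum_comm]
    refine Finset.sum_congr rfl fun s hs => ?_
    rw [Finset.sum_comm]
    refine Finset.sum_congr rfl fun t ht => ?_
    simp only [Finset.sum_ite_mem, Finset.univ_inter, Finset.sum_const, smul_eq_mul, mul_one]
  -- Fact 3: pairwise intersection bound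
  have h3 : ∑ s ∈ F, ∑ t ∈ F, (s ∩ t).card ≤ m * (d + (m-1) * lam0) := by
    have inner : ∀ s ∈ F, ∑ t ∈ F, (s ∩ t).card ≤ d + (m-1) * lam0 := by
      intro s hs
      rw [← Finset.add_sum_erase _ _ hs, Finset.inter_self, hsize s hs]
      have hb : ∑ t ∈ F.erase s, (s ∩ t).card ≤ (F.erase s).card * lam0 := by
        rw [← smul_eq_mul]
        refine Finset.sum_le_card_nsmul _ _ _ fun t ht => ?_
        exact hmeet s hs t (Finset.mem_of_mem_erase ht)
          (Ne.symm (Finset.ne_of_mem_erase ht))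
      rw [Finset.card_erase_of_mem hs, ← hm] at hb
      omega
    calc ∑ s ∈ F, ∑ t ∈ F, (s ∩ t).card ≤ ∑ _s ∈ F, (d + (m-1) * lam0) :=
          Finset.sum_le_sum inner
      _ = m * (d + (m-1) * lam0) := by rw [Finset.sum_const, smul_eq_mul, hm]
  -- Fact 4: Cauchy–Schwarz
  have h4 : ((∑ x : Fin N, (r x : ℤ)))^2 ≤ N * ∑ x : Fin N, ((r x : ℤ))^2 := by
    have := sq_sum_le_card_mul_sum_sq (s := (Finset.univ : Finset (Fin N)))
      (f := fun x => ((r x : ℤ)))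
    simpa using this
  -- Combine
  have h5 : ((m:ℤ) * d)^2 ≤ (N:ℤ) * (m * (d + ((m:ℤ)-1) * lam0)) := by
    have e1 : (∑ x : Fin N, (r x : ℤ)) = (m:ℤ) * d := by
      rw [← Nat.cast_sum, h1]; push_cast; ring
    have e2 : (∑ x : Fin N, ((r x : ℤ))^2) ≤ (m:ℤ) * (d + ((m:ℤ)-1) * lam0) := by
      have := h3
      have h2' := h2
      calc (∑ x : Fin N, ((r x : ℤ))^2)
          = ((∑ x : Fin N, (r x)^2 : ℕ) : ℤ) := by rw [Nat.cast_sum]; push_cast; ring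
        _ = ((∑ s ∈ F, ∑ t ∈ F, (s ∩ t).card : ℕ) : ℤ) := by rw [h2']
        _ ≤ ((m * (d + (m-1) * lam0) : ℕ) : ℤ) := by exact_mod_cast h3
        _ = (m:ℤ) * (d + ((m:ℤ)-1) * lam0) := by
            push_cast [Nat.cast_sub hpos]; ring
    calc ((m:ℤ) * d)^2 = ((∑ x : Fin N, (r x : ℤ)))^2 := by rw [e1]
      _ ≤ N * ∑ x : Fin N, ((r x : ℤ))^2 := h4
      _ ≤ (N:ℤ) * (m * (d + ((m:ℤ)-1) * lam0)) := by
          have hN0 : (0:ℤ) ≤ N := Nat.cast_nonneg _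
          exact mul_le_mul_of_nonneg_left e2 hN0
  -- Cancel one factor of m
  have hm1 : (1:ℤ) ≤ (m:ℤ) := by exact_mod_cast hpos
  have h6 : (m:ℤ) * (d:ℤ)^2 ≤ (N:ℤ) * d + (N:ℤ) * ((m:ℤ)-1) * lam0 := by
    have hmpos : (0:ℤ) < m := by linarith
    have := h5
    have h5' : (m:ℤ) * ((m:ℤ) * (d:ℤ)^2) ≤
        (m:ℤ) * ((N:ℤ) * d + (N:ℤ) * ((m:ℤ)-1) * lam0) := by linarith [h5]
    exact le_of_mul_le_mul_left h5' hmpos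
  -- Final algebra
  have hl0 : (0:ℤ) ≤ (lam0:ℤ) := Nat.cast_nonneg _
  have hq2 : (2:ℤ) ≤ (q:ℤ) := by exact_mod_cast hq
  have hkey : (d:ℤ)^2 = (N:ℤ) * lam0 + d - lam0 := by rw [hN1, hd1]; ring
  rw [hkey] at h6
  have h7 : (m:ℤ) * ((d:ℤ) - lam0) ≤ (N:ℤ) * ((d:ℤ) - lam0) := by linarith [h6]
  have he : (0:ℤ) < (d:ℤ) - lam0 := by nlinarith [hl0, hq2, hd1]
  have : (m:ℤ) ≤ (N:ℤ) := le_of_mul_le_mul_right h7 he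
  exact_mod_cast this
end
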